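/- arXiv:0811.3922 — 5 statements merged into one kernel-verified Lean document; each statement's English description precedes it below -/
import Mathlib

section
/- Let n ≥ 1 and r = ⌊(n+2)/2⌋. The map x ↦ x − 1 induces a group isomorphism from the multiplicative quotient SL₂^r(ℤ_p)/SL₂^{n+1}(ℤ_p) onto the additive quotient {y ∈ p^r·M₂(ℤ_p) : tr(y) ∈ p^{n+1}ℤ_p} / p^{n+1}·M₂(ℤ_p). -/
/-!
Write `x = 1 + Y`. For `2 × 2` matrices `det (1 + Y) = 1 + tr Y + det Y`, so `det x = 1` forces
`tr Y = -det Y`, which lies in `p^{2r} ℤ_p ⊆ p^{n+1} ℤ_p`; likewise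
`xy - 1 = (x - 1) + (y - 1) + (x - 1)(y - 1)` with the product in `p^{2r} M₂(ℤ_p)`.
Conversely, for `Y` in the lattice the bottom-right entry of `1 + Y` is a unit, so the top-left
entry can be corrected by a multiple of `1 - det (1 + Y) = -tr Y - det Y ∈ p^{n+1} ℤ_p` to reach
determinant `1`.
-/

open Matrix

/-- The congruence subgroup `SL₂^r(ℤ_p) = {x ∈ SL₂(ℤ_p) : x - 1 ≡ 0 mod p^r}`, as a set. -/
def slLevel (p : ℕ) [Fact p.Prime] (r : ℕ) : Set (Matrix.SpecialLinearGroup (Fin 2) ℤ_[p]) :=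
  {x | ∀ i j : Fin 2, ((p : ℤ_[p]) ^ r) ∣ (((x : Matrix (Fin 2) (Fin 2) ℤ_[p])) - 1) i j}

/-- The additive lattice `{y ∈ p^r·M₂(ℤ_p) : tr(y) ∈ p^m·ℤ_p}`. -/
def latL (p : ℕ) [Fact p.Prime] (r m : ℕ) : Set (Matrix (Fin 2) (Fin 2) ℤ_[p]) :=
  {y | (∀ i j : Fin 2, ((p : ℤ_[p]) ^ r) ∣ y i j) ∧ ((p : ℤ_[p]) ^ m) ∣ Matrix.trace y}

section

variable {R : Type*} [CommRing R]

theorem pow_dvd_mul_of_le_add {q a b : R} {m r s : ℕ} (hm : m ≤ r + s) (ha : q ^ r ∣ a)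
    (hb : q ^ s ∣ b) : q ^ m ∣ a * b :=
  (pow_dvd_pow q hm).trans (pow_add q r s ▸ mul_dvd_mul ha hb)

theorem IsLocalRing.isUnit_one_add_of_dvd [IsLocalRing R] {q y : R} (hq : ¬IsUnit q)
    (hy : q ∣ y) : IsUnit (1 + y) := by
  have hy' : -y ∈ maximalIdeal R :=
    neg_mem (Ideal.mem_of_dvd _ hy ((mem_maximalIdeal q).2 hq))
  simpa using isUnit_one_sub_self_of_mem_nonunits (-y) hy'

namespace Matrix

theorem pow_dvd_mul_apply {ι : Type*} [Fintype ι] {q : R} {m r s : ℕ} (hm : m ≤ r + s)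
    {A B : Matrix ι ι R} (hA : ∀ i j, q ^ r ∣ A i j) (hB : ∀ i j, q ^ s ∣ B i j) (i j : ι) :
    q ^ m ∣ (A * B) i j :=
  Finset.dvd_sum fun k _ => pow_dvd_mul_of_le_add hm (hA i k) (hB k j)

theorem pow_dvd_det_fin_two {q : R} {m r : ℕ} (hm : m ≤ r + r) {A : Matrix (Fin 2) (Fin 2) R}
    (hA : ∀ i j, q ^ r ∣ A i j) : q ^ m ∣ A.det := by
  rw [det_fin_two]
  exact dvd_sub (pow_dvd_mul_of_le_add hm (hA 0 0) (hA 1 1))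
    (pow_dvd_mul_of_le_add hm (hA 0 1) (hA 1 0))

theorem det_one_add_fin_two (Y : Matrix (Fin 2) (Fin 2) R) :
    (1 + Y).det = 1 + Y.trace + Y.det := by
  simp only [det_fin_two, trace_fin_two, add_apply, one_apply_eq, ne_eq, zero_ne_one,
    one_ne_zero, not_false_eq_true, one_apply_ne, zero_add]
  ring

theorem det_add_single_zero_zero_fin_two (A : Matrix (Fin 2) (Fin 2) R) (e : R) :
    (A + single 0 0 e).det = A.det + e * A 1 1 := by
  simp only [det_fin_two, add_apply, single_apply_same, zero_ne_one, and_self, and_false,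
    and_true, not_false_eq_true, single_apply_of_ne, add_zero]
  ring

theorem exists_det_add_single_eq_one {A : Matrix (Fin 2) (Fin 2) R} (hA : IsUnit (A 1 1)) :
    ∃ e, (1 - A.det) ∣ e ∧ (A + single 0 0 e).det = 1 := by
  obtain ⟨u, hu⟩ := hA
  refine ⟨(1 - A.det) * ↑u⁻¹, dvd_mul_right _ _, ?_⟩
  rw [det_add_single_zero_zero_fin_two, ← hu, mul_assoc, Units.inv_mul, mul_one]
  ring

end Matrix

namespace Matrix.SpecialLinearGroup

theorem coe_mul_sub_one_sub_sub {ι : Type*} [DecidableEq ι] [Fintype ι]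
    (x y : SpecialLinearGroup ι R) :
    ((x * y : SpecialLinearGroup ι R) : Matrix ι ι R) - 1 - ((x : Matrix ι ι R) - 1) -
        ((y : Matrix ι ι R) - 1) = ((x : Matrix ι ι R) - 1) * ((y : Matrix ι ι R) - 1) := by
  rw [coe_mul]
  noncomm_ring

theorem trace_sub_one_eq_neg_det (x : SpecialLinearGroup (Fin 2) R) :
    ((x : Matrix (Fin 2) (Fin 2) R) - 1).trace = -((x : Matrix (Fin 2) (Fin 2) R) - 1).det := by
  have hdet := det_one_add_fin_two ((x : Matrix (Fin 2) (Fin 2) R) - 1)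
  rw [add_sub_cancel, x.det_coe] at hdet
  linear_combination -hdet

theorem pow_dvd_trace_sub_one {q : R} {m r : ℕ} (hm : m ≤ r + r)
    {x : SpecialLinearGroup (Fin 2) R}
    (hx : ∀ i j, q ^ r ∣ ((x : Matrix (Fin 2) (Fin 2) R) - 1) i j) :
    q ^ m ∣ ((x : Matrix (Fin 2) (Fin 2) R) - 1).trace := by
  rw [trace_sub_one_eq_neg_det]
  exact (pow_dvd_det_fin_two hm hx).neg_right

theorem exists_sub_one_pow_dvd [IsLocalRing R] {q : R} (hq : ¬IsUnit q) {m r : ℕ} (hr : r ≠ 0)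
    (hrm : r ≤ m) (hm : m ≤ r + r) {Y : Matrix (Fin 2) (Fin 2) R} (hY : ∀ i j, q ^ r ∣ Y i j)
    (htr : q ^ m ∣ Y.trace) :
    ∃ x : SpecialLinearGroup (Fin 2) R, (∀ i j, q ^ r ∣ ((x : Matrix (Fin 2) (Fin 2) R) - 1) i j) ∧
      ∀ i j, q ^ m ∣ ((x : Matrix (Fin 2) (Fin 2) R) - 1 - Y) i j := by
  have hunit : IsUnit ((1 + Y) 1 1) := by
    simpa using IsLocalRing.isUnit_one_add_of_dvd hq ((dvd_pow_self q hr).trans (hY 1 1))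
  obtain ⟨e, hde, hdet⟩ := exists_det_add_single_eq_one hunit
  have he : q ^ m ∣ e := by
    refine dvd_trans ?_ hde
    rw [show 1 - (1 + Y).det = -Y.trace - Y.det by rw [det_one_add_fin_two]; ring]
    exact (dvd_neg.2 htr).sub (pow_dvd_det_fin_two hm hY)
  have hcorr : ∀ i j, q ^ m ∣ single (0 : Fin 2) (0 : Fin 2) e i j := by
    intro i j
    rw [single_apply]
    split_ifs
    exacts [he, dvd_zero _]
  refine ⟨⟨1 + Y + single 0 0 e, hdet⟩, fun i j => ?_, fun i j => ?_⟩
  · rw [coe_mk, add_sub_right_comm, add_sub_cancel_left]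
    exact dvd_add (hY i j) ((pow_dvd_pow q hrm).trans (hcorr i j))
  · rw [coe_mk, add_sub_right_comm, add_sub_cancel_left, add_sub_cancel_left]
    exact hcorr i j

end Matrix.SpecialLinearGroup

end

theorem stmt2_general (p : ℕ) [Fact p.Prime] (n r : ℕ)
    (hr : r = (n + 2) / 2) :
    (∀ x ∈ slLevel p r, ((x : Matrix (Fin 2) (Fin 2) ℤ_[p]) - 1) ∈ latL p r (n + 1)) ∧
    (∀ x ∈ slLevel p r, ∀ y ∈ slLevel p r, ∀ i j : Fin 2,
      ((p : ℤ_[p]) ^ (n + 1)) ∣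
        ((((x * y : Matrix.SpecialLinearGroup (Fin 2) ℤ_[p]) : Matrix (Fin 2) (Fin 2) ℤ_[p]) - 1)
          - ((x : Matrix (Fin 2) (Fin 2) ℤ_[p]) - 1)
          - ((y : Matrix (Fin 2) (Fin 2) ℤ_[p]) - 1)) i j) ∧
    (∀ x ∈ slLevel p r, (x ∈ slLevel p (n + 1) ↔
      ∀ i j : Fin 2, ((p : ℤ_[p]) ^ (n + 1)) ∣ ((x : Matrix (Fin 2) (Fin 2) ℤ_[p]) - 1) i j)) ∧
    (∀ y ∈ latL p r (n + 1), ∃ x ∈ slLevel p r, ∀ i j : Fin 2,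
      ((p : ℤ_[p]) ^ (n + 1)) ∣ (((x : Matrix (Fin 2) (Fin 2) ℤ_[p]) - 1) - y) i j) := by
  have h2r : n + 1 ≤ r + r := by omega
  refine ⟨fun x hx => ⟨hx, SpecialLinearGroup.pow_dvd_trace_sub_one h2r hx⟩,
    fun x hx y hy i j => ?_, fun x _ => Iff.rfl, fun y ⟨hy, htr⟩ => ?_⟩
  · rw [SpecialLinearGroup.coe_mul_sub_one_sub_sub]
    exact pow_dvd_mul_apply h2r hx hy i j
  · exact SpecialLinearGroup.exists_sub_one_pow_dvd PadicInt.prime_p.not_isUnit (by omega)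
      (by omega) h2r hy htr

/-- for `n ≥ 1` and `r = ⌊(n+2)/2⌋`, the map `x ↦ x - 1` induces a group
isomorphism `SL₂^r(ℤ_p)/SL₂^{n+1}(ℤ_p) ≃ {y ∈ p^r M₂(ℤ_p) : tr y ∈ p^{n+1}ℤ_p}/p^{n+1}M₂(ℤ_p)`:
it maps into the target lattice, is a homomorphism modulo `p^{n+1}M₂(ℤ_p)`, has kernel exactly
`SL₂^{n+1}(ℤ_p)`, and is surjective modulo `p^{n+1}M₂(ℤ_p)`. -/
theorem stmt2 (p : ℕ) [Fact p.Prime] (hp : p ≠ 2) (n r : ℕ) (hn : 1 ≤ n)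
    (hr : r = (n + 2) / 2) :
    (∀ x ∈ slLevel p r, ((x : Matrix (Fin 2) (Fin 2) ℤ_[p]) - 1) ∈ latL p r (n + 1)) ∧
    (∀ x ∈ slLevel p r, ∀ y ∈ slLevel p r, ∀ i j : Fin 2,
      ((p : ℤ_[p]) ^ (n + 1)) ∣
        ((((x * y : Matrix.SpecialLinearGroup (Fin 2) ℤ_[p]) : Matrix (Fin 2) (Fin 2) ℤ_[p]) - 1)
          - ((x : Matrix (Fin 2) (Fin 2) ℤ_[p]) - 1)
          - ((y : Matrix (Fin 2) (Fin 2) ℤ_[p]) - 1)) i j) ∧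
    (∀ x ∈ slLevel p r, (x ∈ slLevel p (n + 1) ↔
      ∀ i j : Fin 2, ((p : ℤ_[p]) ^ (n + 1)) ∣ ((x : Matrix (Fin 2) (Fin 2) ℤ_[p]) - 1) i j)) ∧
    (∀ y ∈ latL p r (n + 1), ∃ x ∈ slLevel p r, ∀ i j : Fin 2,
      ((p : ℤ_[p]) ^ (n + 1)) ∣ (((x : Matrix (Fin 2) (Fin 2) ℤ_[p]) - 1) - y) i j) :=
  stmt2_general p n r hr
end

section
/- Let n ≥ 1, r = ⌊(n+2)/2⌋, β = [[0, yz],[y, 0]] ∈ M₂(F) with v(y) = −n exactly, and ψ_β(x) = ψ(tr(β(x−1))) for x ∈ SL₂^r(ℤ_p). Then the stabilizer {g ∈ SL₂(ℤ_p) : ψ_β(g·x·g^{−1}) = ψ_β(x) for all x ∈ SL₂^r(ℤ_p)} equals the set T·SL₂^{n−r+1}(ℤ_p) = {g_{u,v}·h : (u,v) ∈ ℤ_p², u² − z·v² = 1, h ∈ SL₂^{n−r+1}(ℤ_p)}. -/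
open Matrix

/-- The traceless matrix `β = !![0, y·z; y, 0]` attached to the traceless element `β = yα`
of `E = F(α)`, `α² = z`, under the identification `a + bα ↦ !![a, bz; b, a]`. -/
noncomputable def betaMat (p : ℕ) [Fact p.Prime] (y : ℚ_[p]) (z : ℤ_[p]ˣ) : Matrix (Fin 2) (Fin 2) ℚ_[p] :=
  !![0, y * ((z : ℤ_[p]) : ℚ_[p]); y, 0]

/-- `ψ_β(x) = ψ(tr(β(x-1)))`. -/
noncomputable def psiBeta (p : ℕ) [Fact p.Prime] (ψ : AddChar ℚ_[p] ℂˣ)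
    (β : Matrix (Fin 2) (Fin 2) ℚ_[p]) (x : Matrix.SpecialLinearGroup (Fin 2) ℤ_[p]) : ℂˣ :=
  ψ (Matrix.trace (β * ((x : Matrix (Fin 2) (Fin 2) ℤ_[p]).map (fun t => (t : ℚ_[p])) - 1)))

/-!
Conjugating by `g` multiplies `ψ_β` by `x ↦ ψ(tr((g⁻¹βg - β)x))`, and with `β = yα` the matrix
`g⁻¹αg - α` is integral and traceless. Testing against the elements `1 + p^r t N` with `N`
nilpotent shows that `g` stabilises `ψ_β` on `SL₂^r(ℤ_p)` exactly when `g⁻¹αg ≡ α` modulo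
`p^m`, `m = n + 1 - r`, i.e. when `g = !![a, b; c, d]` commutes with `α` modulo `p^m`:
`a ≡ d` and `b ≡ zc`. Then `g ≡ a + cα`, whose norm `a² - zc²` is `≡ det g = 1`; rescaling
`(a, c)` by a square root of the inverse norm (Hensel, `p` odd) gives `t ∈ T` with
`t⁻¹g ∈ SL₂^m(ℤ_p)`.
-/

open scoped MatrixGroups

lemma TwoSidedIdeal.conj_sub_self_mem_iff {R : Type*} [Ring R] (I : TwoSidedIdeal R)
    {g g' : R} (h₁ : g' * g = 1) (h₂ : g * g' = 1) (A : R) :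
    g' * A * g - A ∈ I ↔ A * g - g * A ∈ I := by
  constructor <;> intro h
  · simpa [mul_sub, ← mul_assoc, h₂] using I.mul_mem_left g _ h
  · simpa [mul_sub, ← mul_assoc, h₁] using I.mul_mem_left g' _ h

lemma Matrix.det_one_add_smul_of_trace_eq_zero_of_det_eq_zero {R : Type*} [CommRing R]
    {N : Matrix (Fin 2) (Fin 2) R} (htr : N.trace = 0) (hdet : N.det = 0) (s : R) :
    (1 + s • N).det = 1 := by
  rw [Matrix.det_fin_two] at hdet ⊢
  rw [Matrix.trace_fin_two] at htr
  simp only [Matrix.add_apply, Matrix.smul_apply, Matrix.one_apply_eq, smul_eq_mul,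
    Matrix.one_apply_ne zero_ne_one, Matrix.one_apply_ne one_ne_zero]
  linear_combination s * htr + s ^ 2 * hdet

lemma Matrix.SpecialLinearGroup.trace_inv_mul_mul_sub {n R : Type*} [Fintype n] [DecidableEq n]
    [CommRing R] (g : SpecialLinearGroup n R) (A : Matrix n n R) :
    (((g⁻¹ : SpecialLinearGroup n R) : Matrix n n R) * A * g - A).trace = 0 := by
  rw [Matrix.trace_sub, Matrix.trace_mul_cycle, ← SpecialLinearGroup.coe_mul, mul_inv_cancel,
    SpecialLinearGroup.coe_one, Matrix.one_mul, sub_self]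

namespace PadicInt

variable {p : ℕ} [Fact p.Prime]

lemma isUnit_iff_of_dvd_sub {a b : ℤ_[p]} (h : (p : ℤ_[p]) ∣ a - b) : IsUnit a ↔ IsUnit b := by
  rw [← not_iff_not, not_isUnit_iff, not_isUnit_iff, norm_lt_one_iff_dvd, norm_lt_one_iff_dvd]
  exact dvd_iff_dvd_of_dvd_sub h

lemma isUnit_two (hp : p ≠ 2) : IsUnit (2 : ℤ_[p]) := by
  rw [isUnit_iff, show (2 : ℤ_[p]) = (2 : ℕ) by norm_cast, norm_natCast_eq_one_iff]
  exact (Nat.coprime_primes Fact.out Nat.prime_two).2 hp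

open Polynomial in
lemma exists_sq_mul_eq_one (hp : p ≠ 2) {k : ℕ} (hk : 1 ≤ k) {N : ℤ_[p]}
    (hN : (p : ℤ_[p]) ^ k ∣ N - 1) : ∃ l : ℤ_[p], l ^ 2 * N = 1 ∧ (p : ℤ_[p]) ^ k ∣ l - 1 := by
  have hpN : (p : ℤ_[p]) ∣ N - 1 := (dvd_pow_self _ (by omega)).trans hN
  have hNu : IsUnit N := (isUnit_iff_of_dvd_sub hpN).2 isUnit_one
  let F : ℤ_[p][X] := C N * X ^ 2 - 1
  have hF' : ‖F.derivative.aeval (1 : ℤ_[p])‖ = 1 := by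
    rw [show F.derivative.aeval (1 : ℤ_[p]) = N * 2 by simp [F, one_add_one_eq_two]]
    exact isUnit_iff.1 (hNu.mul (isUnit_two hp))
  have hF : ‖F.aeval (1 : ℤ_[p])‖ < ‖F.derivative.aeval (1 : ℤ_[p])‖ ^ 2 := by
    rw [hF', one_pow]
    simpa [F, norm_lt_one_iff_dvd] using hpN
  obtain ⟨l, hroot, hclose, -, -⟩ := hensels_lemma hF
  have hl : l ^ 2 * N = 1 := by
    simp only [F, map_sub, map_mul, map_pow, aeval_C, aeval_X, map_one, sub_eq_zero] at hroot
    simpa [mul_comm] using hroot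
  have hl1 : (p : ℤ_[p]) ∣ l - 1 := by rwa [hF', norm_lt_one_iff_dvd] at hclose
  -- `l + 1 ≡ 2` is a unit since `p` is odd
  have hu : IsUnit ((l + 1) * N) :=
    ((isUnit_iff_of_dvd_sub (by convert hl1 using 1; ring)).2 (isUnit_two hp)).mul hNu
  refine ⟨l, hl, ?_⟩
  rw [← hu.dvd_mul_right, show (l - 1) * ((l + 1) * N) = -(N - 1) by linear_combination hl]
  exact (dvd_neg).2 hN

end PadicInt

section Conductor

variable {p : ℕ} [Fact p.Prime] {M : Type*} [Monoid M] {ψ : AddChar ℚ_[p] M}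

lemma forall_apply_mul_eq_one_iff_norm_lt_one
    (hψ1 : ∀ t : ℤ_[p], ψ ((p : ℚ_[p]) * (t : ℚ_[p])) = 1)
    (hψ2 : ∃ t : ℤ_[p], ψ ((t : ℚ_[p])) ≠ 1) (w : ℚ_[p]) :
    (∀ t : ℤ_[p], ψ (w * t) = 1) ↔ ‖w‖ < 1 := by
  constructor
  · intro h
    by_contra! hw
    obtain ⟨t₀, ht₀⟩ := hψ2
    have hw0 : w ≠ 0 := norm_pos_iff.1 (one_pos.trans_le hw)
    let s : ℤ_[p] := ⟨t₀ / w, by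
      rw [norm_div]; exact div_le_one_of_le₀ (t₀.norm_le_one.trans hw) (norm_nonneg _)⟩
    apply ht₀
    simpa [s, mul_div_cancel₀ _ hw0] using h s
  · intro hw t
    obtain ⟨s, hs⟩ := (PadicInt.norm_lt_one_iff_dvd ⟨w, hw.le⟩).1 hw
    have hws : w = p * s := congrArg ((↑) : ℤ_[p] → ℚ_[p]) hs
    rw [hws, mul_assoc, ← PadicInt.coe_mul]
    exact hψ1 _

lemma forall_apply_mul_eq_one_iff_dvd
    (hψ1 : ∀ t : ℤ_[p], ψ ((p : ℚ_[p]) * (t : ℚ_[p])) = 1)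
    (hψ2 : ∃ t : ℤ_[p], ψ ((t : ℚ_[p])) ≠ 1) {y : ℚ_[p]} {n : ℕ} (hy : ‖y‖ = (p : ℝ) ^ n)
    (e : ℤ_[p]) :
    (∀ t : ℤ_[p], ψ (y * ↑(e * t)) = 1) ↔ (p : ℤ_[p]) ^ (n + 1) ∣ e := by
  simp_rw [PadicInt.coe_mul, ← mul_assoc]
  rw [forall_apply_mul_eq_one_iff_norm_lt_one hψ1 hψ2, norm_mul, hy,
    PadicInt.padic_norm_e_of_padicInt, ← Ideal.mem_span_singleton,
    ← PadicInt.norm_le_pow_iff_mem_span_pow, PadicInt.norm_le_pow_iff_norm_lt_pow_add_one]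
  have hp : (0 : ℝ) < p := by exact_mod_cast (Fact.out : p.Prime).pos
  rw [show (-((n + 1 : ℕ) : ℤ) + 1) = -(n : ℤ) by push_cast; ring, _root_.zpow_neg, zpow_natCast,
    ← one_div, lt_div_iff₀ (by positivity), mul_comm]

end Conductor

section Stabilizer

variable {p : ℕ} [Fact p.Prime]

local notation "M₂" => Matrix (Fin 2) (Fin 2) ℤ_[p]
local notation "toQ" => RingHom.mapMatrix (PadicInt.Coe.ringHom (p := p))

variable (p) in
noncomputable def matLevel (m : ℕ) : TwoSidedIdeal M₂ :=
  (Ideal.span {(p : ℤ_[p]) ^ m}).toTwoSided.matrix (Fin 2)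

lemma mem_matLevel {m : ℕ} {A : M₂} : A ∈ matLevel p m ↔ ∀ i j, (p : ℤ_[p]) ^ m ∣ A i j := by
  simp [matLevel, Ideal.mem_span_singleton]

lemma mem_slLevel_iff {r : ℕ} {x : SL(2, ℤ_[p])} : x ∈ slLevel p r ↔ (x : M₂) - 1 ∈ matLevel p r :=
  mem_matLevel.symm

lemma mul_mem_matLevel_add {m r : ℕ} {A X : M₂} (hA : A ∈ matLevel p m) (hX : X ∈ matLevel p r) :
    A * X ∈ matLevel p (m + r) := by
  rw [mem_matLevel] at *
  intro i j
  rw [pow_add, Matrix.mul_apply]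
  exact Finset.dvd_sum fun k _ => mul_dvd_mul (hA i k) (hX k j)

lemma pow_dvd_trace_of_mem_matLevel {m : ℕ} {A : M₂} (hA : A ∈ matLevel p m) :
    (p : ℤ_[p]) ^ m ∣ A.trace :=
  Finset.dvd_sum fun i _ => mem_matLevel.1 hA i i

lemma psiBeta_mul_mul_inv (ψ : AddChar ℚ_[p] ℂˣ) (β : Matrix (Fin 2) (Fin 2) ℚ_[p])
    (g x : SL(2, ℤ_[p])) :
    psiBeta p ψ β (g * x * g⁻¹) = psiBeta p ψ β x *
      ψ (((toQ (g⁻¹ : SL(2, ℤ_[p])) * β * toQ g - β) * toQ x).trace) := by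
  have hmap : ∀ A : M₂, A.map (fun t => (t : ℚ_[p])) = toQ A := fun _ => rfl
  have hconj : ((g * x * g⁻¹ : SL(2, ℤ_[p])) : M₂) = g * x * (g⁻¹ : SL(2, ℤ_[p])) := rfl
  rw [psiBeta, psiBeta, ← AddChar.map_add_eq_mul, hconj, hmap, hmap]
  congr 1
  simp only [map_mul, Matrix.mul_sub, Matrix.sub_mul, Matrix.trace_sub, Matrix.mul_one]
  rw [← Matrix.mul_assoc, Matrix.trace_mul_cycle]
  simp only [Matrix.mul_assoc]
  abel

variable (p) in
noncomputable def alphaMat (z : ℤ_[p]) : M₂ := !![0, z; 1, 0]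

lemma betaMat_eq_smul (y : ℚ_[p]) (z : ℤ_[p]ˣ) :
    betaMat p y z = y • toQ (alphaMat p z) := by
  ext i j
  fin_cases i <;> fin_cases j <;> simp [betaMat, alphaMat, RingHom.mapMatrix_apply]
  exact .inl rfl

lemma trace_toQ (A : M₂) : (toQ A).trace = (A.trace : ℚ_[p]) :=
  (AddMonoidHom.map_trace PadicInt.Coe.ringHom A).symm

lemma psiBeta_betaMat_mul_mul_inv (ψ : AddChar ℚ_[p] ℂˣ) (y : ℚ_[p]) (z : ℤ_[p]ˣ)
    (g x : SL(2, ℤ_[p])) :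
    psiBeta p ψ (betaMat p y z) (g * x * g⁻¹) = psiBeta p ψ (betaMat p y z) x *
      ψ (y * (((((g⁻¹ : SL(2, ℤ_[p])) : M₂) * alphaMat p z * g - alphaMat p z) * x).trace :
        ℤ_[p])) := by
  rw [psiBeta_mul_mul_inv, betaMat_eq_smul]
  congr 2
  simp only [Matrix.smul_mul, Matrix.mul_smul, ← smul_sub, Matrix.trace_smul, smul_eq_mul,
    ← map_mul, ← map_sub, trace_toQ]

lemma pow_dvd_trace_mul_of_forall_apply_trace_eq_one {M : Type*} [Monoid M]
    {ψ : AddChar ℚ_[p] M} (hψ1 : ∀ t : ℤ_[p], ψ ((p : ℚ_[p]) * (t : ℚ_[p])) = 1)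
    (hψ2 : ∃ t : ℤ_[p], ψ ((t : ℚ_[p])) ≠ 1) {y : ℚ_[p]} {n r m : ℕ} (hy : ‖y‖ = (p : ℝ) ^ n)
    (hrm : r + m = n + 1) {C : M₂} (H : ∀ x ∈ slLevel p r, ψ (y * ↑(C * (↑x - 1)).trace) = 1)
    (N : M₂) (htr : N.trace = 0) (hdet : N.det = 0) :
    (p : ℤ_[p]) ^ m ∣ (C * N).trace := by
  have hpr : (p : ℤ_[p]) ^ (n + 1) ∣ p ^ r * (C * N).trace := by
    rw [← forall_apply_mul_eq_one_iff_dvd hψ1 hψ2 hy]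
    intro t
    let x : SL(2, ℤ_[p]) :=
      ⟨1 + (p ^ r * t) • N, N.det_one_add_smul_of_trace_eq_zero_of_det_eq_zero htr hdet _⟩
    have hx1 : (x : M₂) - 1 = (p ^ r * t) • N := add_sub_cancel_left _ _
    have hx : x ∈ slLevel p r := by
      rw [mem_slLevel_iff, mem_matLevel, hx1]
      exact fun i j => (dvd_mul_right _ _).mul_right _
    have htrx : (C * (↑x - 1)).trace = p ^ r * (C * N).trace * t := by
      rw [hx1, Matrix.mul_smul, Matrix.trace_smul, smul_eq_mul]
      ring
    rw [← htrx]
    exact H x hx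
  have hp0 : (p : ℤ_[p]) ≠ 0 := by exact_mod_cast (Fact.out : p.Prime).ne_zero
  rwa [← hrm, pow_add, mul_dvd_mul_iff_left (pow_ne_zero _ hp0)] at hpr

lemma mem_matLevel_iff_forall_apply_trace_eq_one {M : Type*} [Monoid M] {ψ : AddChar ℚ_[p] M}
    (hp : p ≠ 2) (hψ1 : ∀ t : ℤ_[p], ψ ((p : ℚ_[p]) * (t : ℚ_[p])) = 1)
    (hψ2 : ∃ t : ℤ_[p], ψ ((t : ℚ_[p])) ≠ 1) {y : ℚ_[p]} {n r m : ℕ} (hy : ‖y‖ = (p : ℝ) ^ n)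
    (hrm : r + m = n + 1) {C : M₂} (hC : C.trace = 0) :
    (∀ x ∈ slLevel p r, ψ (y * ↑(C * (↑x - 1)).trace) = 1) ↔ C ∈ matLevel p m := by
  constructor
  · intro H
    have htest (N : M₂) (htr : N.trace = 0) (hdet : N.det = 0) :=
      pow_dvd_trace_mul_of_forall_apply_trace_eq_one hψ1 hψ2 hy hrm H N htr hdet
    have hC10 := htest !![0, 1; 0, 0] (by simp [Matrix.trace_fin_two]) (by simp)
    have hC01 := htest !![0, 0; 1, 0] (by simp [Matrix.trace_fin_two]) (by simp)
    -- a traceless test matrix only sees `C 0 0 - C 1 1`, hence the need to invert 2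
    have hdiag := htest !![1, 1; -1, -1] (by simp [Matrix.trace_fin_two]) (by simp)
    simp only [Matrix.trace_fin_two, Fin.isValue, Matrix.mul_apply, Matrix.of_apply,
      Matrix.cons_val', Matrix.cons_val_zero, Matrix.cons_val_one, Matrix.cons_val_fin_one,
      Fin.sum_univ_two, mul_zero, add_zero, mul_one, zero_add, mul_neg] at hC10 hC01 hdiag
    rw [Matrix.trace_fin_two] at hC
    have hC00 : (p : ℤ_[p]) ^ m ∣ C 0 0 := by
      rw [← (PadicInt.isUnit_two hp).dvd_mul_left,
        show 2 * C 0 0 = C 0 0 + -C 0 1 + (C 1 0 + -C 1 1) + C 0 1 - C 1 0 by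
          linear_combination hC]
      exact dvd_sub (dvd_add hdiag hC01) hC10
    rw [mem_matLevel]
    intro i j
    fin_cases i <;> fin_cases j
    · exact hC00
    · exact hC01
    · exact hC10
    · simpa [eq_neg_of_add_eq_zero_right hC] using hC00
  · intro hC' x hx
    have : (p : ℤ_[p]) ^ (n + 1) ∣ (C * (↑x - 1)).trace := by
      rw [← hrm, add_comm]
      exact pow_dvd_trace_of_mem_matLevel (mul_mem_matLevel_add hC' (mem_slLevel_iff.1 hx))
    simpa using (forall_apply_mul_eq_one_iff_dvd hψ1 hψ2 hy _).2 this 1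

lemma alphaMat_commute (z u v : ℤ_[p]) : Commute (alphaMat p z) !![u, v * z; v, u] := by
  rw [Commute, SemiconjBy, alphaMat, Matrix.mul_fin_two, Matrix.mul_fin_two]
  ext i j
  fin_cases i <;> fin_cases j <;> simp [mul_comm]

lemma commutator_mem_matLevel_of_eq_mul {m : ℕ} (z u v : ℤ_[p]) {g h : SL(2, ℤ_[p])}
    (hh : h ∈ slLevel p m) (hg : (g : M₂) = !![u, v * z; v, u] * h) :
    alphaMat p z * g - g * alphaMat p z ∈ matLevel p m := by
  set t : M₂ := !![u, v * z; v, u]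
  have hcomm : ∀ A : M₂, alphaMat p z * (t * A) - t * A * alphaMat p z
      = t * (alphaMat p z * (A - 1) - (A - 1) * alphaMat p z) := fun A => by
    rw [← mul_assoc, (alphaMat_commute z u v).eq]
    noncomm_ring
  rw [hg, hcomm]
  have hh' := mem_slLevel_iff.1 hh
  exact (matLevel p m).mul_mem_left t _
    ((matLevel p m).sub_mem ((matLevel p m).mul_mem_left _ _ hh')
      ((matLevel p m).mul_mem_right _ _ hh'))

lemma exists_eq_mul_of_commutator_mem_matLevel (hp : p ≠ 2) {m : ℕ} (hm : 1 ≤ m) (z : ℤ_[p])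
    (g : SL(2, ℤ_[p])) (hg : alphaMat p z * g - g * alphaMat p z ∈ matLevel p m) :
    ∃ (u v : ℤ_[p]) (h : SL(2, ℤ_[p])), u ^ 2 - z * v ^ 2 = 1 ∧ h ∈ slLevel p m ∧
      (g : M₂) = !![u, v * z; v, u] * h := by
  obtain ⟨a, b, c, d, hg_eq⟩ : ∃ a b c d, (g : M₂) = !![a, b; c, d] :=
    ⟨_, _, _, _, Matrix.eta_fin_two _⟩
  have hdet : a * d - b * c = 1 := by rw [← Matrix.det_fin_two_of, ← hg_eq]; exact g.2
  rw [hg_eq, mem_matLevel] at hg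
  obtain ⟨k₁, hk₁⟩ : (p : ℤ_[p]) ^ m ∣ z * c - b := by
    simpa [alphaMat, Matrix.mul_fin_two] using hg 0 0
  obtain ⟨k₂, hk₂⟩ : (p : ℤ_[p]) ^ m ∣ a - d := by
    simpa [alphaMat, Matrix.mul_fin_two] using hg 1 0
  obtain ⟨l, hl, k₃, hk₃⟩ := PadicInt.exists_sq_mul_eq_one hp hm (N := a ^ 2 - z * c ^ 2)
    ⟨a * k₂ - c * k₁, by linear_combination a * hk₂ - c * hk₁ + hdet⟩
  have hnorm : (l * a) ^ 2 - z * (l * c) ^ 2 = 1 := by linear_combination hl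
  let t : SL(2, ℤ_[p]) :=
    ⟨!![l * a, l * c * z; l * c, l * a], by rw [Matrix.det_fin_two_of]; linear_combination hnorm⟩
  have hgt : (g : M₂) - t ∈ matLevel p m := by
    rw [hg_eq, mem_matLevel]
    intro i j
    fin_cases i <;> fin_cases j <;>
      simp only [Fin.zero_eta, Fin.mk_one, Fin.isValue, Matrix.sub_apply, Matrix.of_apply,
        Matrix.cons_val', Matrix.cons_val_zero, Matrix.cons_val_one, Matrix.cons_val_fin_one, t]
    · exact ⟨-(a * k₃), by linear_combination -a * hk₃⟩
    · exact ⟨-(k₁ + z * c * k₃), by linear_combination -hk₁ - z * c * hk₃⟩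
    · exact ⟨-(c * k₃), by linear_combination -c * hk₃⟩
    · exact ⟨-(k₂ + a * k₃), by linear_combination -hk₂ - a * hk₃⟩
  refine ⟨l * a, l * c, t⁻¹ * g, hnorm, ?_, ?_⟩
  · have h1 : ((t⁻¹ * g : SL(2, ℤ_[p])) : M₂) - 1 = (t⁻¹ : SL(2, ℤ_[p])) * ((g : M₂) - t) := by
      simp [Matrix.mul_sub, Matrix.adjugate_mul]
    rw [mem_slLevel_iff, h1]
    exact (matLevel p m).mul_mem_left _ _ hgt
  · change (g : M₂) = (t : M₂) * ((t⁻¹ * g : SL(2, ℤ_[p])) : M₂)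
    simp [← Matrix.mul_assoc, Matrix.mul_adjugate]

lemma commutator_mem_matLevel_iff (hp : p ≠ 2) {m : ℕ} (hm : 1 ≤ m) (z : ℤ_[p])
    (g : SL(2, ℤ_[p])) :
    alphaMat p z * g - g * alphaMat p z ∈ matLevel p m ↔
      ∃ (u v : ℤ_[p]) (h : SL(2, ℤ_[p])), u ^ 2 - z * v ^ 2 = 1 ∧ h ∈ slLevel p m ∧
        (g : M₂) = !![u, v * z; v, u] * h :=
  ⟨exists_eq_mul_of_commutator_mem_matLevel hp hm z g,
    fun ⟨u, v, _, _, hh, hg⟩ => commutator_mem_matLevel_of_eq_mul z u v hh hg⟩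

lemma forall_psiBeta_mul_mul_inv_eq_iff (ψ : AddChar ℚ_[p] ℂˣ) (y : ℚ_[p]) (z : ℤ_[p]ˣ) (r : ℕ)
    (g : SL(2, ℤ_[p])) :
    (∀ x ∈ slLevel p r,
        psiBeta p ψ (betaMat p y z) (g * x * g⁻¹) = psiBeta p ψ (betaMat p y z) x) ↔
      ∀ x ∈ slLevel p r,
        ψ (y * ↑((((g⁻¹ : SL(2, ℤ_[p])) : M₂) * alphaMat p z * g - alphaMat p z) *
          (↑x - 1)).trace) = 1 := by
  refine forall₂_congr fun x _ => ?_
  rw [psiBeta_betaMat_mul_mul_inv, mul_eq_left, Matrix.mul_sub, Matrix.trace_sub, Matrix.mul_one,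
    SpecialLinearGroup.trace_inv_mul_mul_sub, sub_zero]

end Stabilizer

theorem stmt5_general (p : ℕ) [Fact p.Prime] (hp : p ≠ 2)
    (z : ℤ_[p]ˣ)
    (ψ : AddChar ℚ_[p] ℂˣ)
    (hψ1 : ∀ t : ℤ_[p], ψ ((p : ℚ_[p]) * (t : ℚ_[p])) = 1)
    (hψ2 : ∃ t : ℤ_[p], ψ ((t : ℚ_[p])) ≠ 1)
    (n r : ℕ) (hn : 1 ≤ n) (hr : r = (n + 2) / 2)
    (y : ℚ_[p]) (hy : y ≠ 0) (hyv : y.valuation = -(n : ℤ)) :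
    ∀ g : Matrix.SpecialLinearGroup (Fin 2) ℤ_[p],
      ((∀ x ∈ slLevel p r,
          psiBeta p ψ (betaMat p y z) (g * x * g⁻¹) = psiBeta p ψ (betaMat p y z) x) ↔
        ∃ (u v : ℤ_[p]) (h : Matrix.SpecialLinearGroup (Fin 2) ℤ_[p]),
          u ^ 2 - (z : ℤ_[p]) * v ^ 2 = 1 ∧ h ∈ slLevel p (n - r + 1) ∧
          (g : Matrix (Fin 2) (Fin 2) ℤ_[p])
            = !![u, v * (z : ℤ_[p]); v, u] * (h : Matrix (Fin 2) (Fin 2) ℤ_[p])) := by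
  intro g
  have hrm : r + (n - r + 1) = n + 1 := by omega
  have hy_norm : ‖y‖ = (p : ℝ) ^ n := by
    rw [Padic.norm_eq_zpow_neg_valuation hy, hyv, neg_neg, zpow_natCast]
  have hg₁ : ((g⁻¹ : SL(2, ℤ_[p])) : Matrix (Fin 2) (Fin 2) ℤ_[p]) * g = 1 := by
    simp [Matrix.adjugate_mul]
  have hg₂ : (g : Matrix (Fin 2) (Fin 2) ℤ_[p]) * (g⁻¹ : SL(2, ℤ_[p])) = 1 := by
    simp [Matrix.mul_adjugate]
  rw [forall_psiBeta_mul_mul_inv_eq_iff,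
    mem_matLevel_iff_forall_apply_trace_eq_one hp hψ1 hψ2 hy_norm hrm
      (SpecialLinearGroup.trace_inv_mul_mul_sub g _),
    TwoSidedIdeal.conj_sub_self_mem_iff _ hg₁ hg₂]
  exact commutator_mem_matLevel_iff hp (by omega) _ g

/-- with `n ≥ 1`, `r = ⌊(n+2)/2⌋`, `β = !![0, yz; y, 0]`, `v(y) = -n` exactly,
the stabilizer `{g ∈ SL₂(ℤ_p) : ψ_β(g·x·g⁻¹) = ψ_β(x) for all x ∈ SL₂^r(ℤ_p)}` equals
`T·SL₂^{n-r+1}(ℤ_p)`, where `T` is the embedded norm-one torus of matrices `!![u, vz; v, u]`,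
`u² - z·v² = 1`. -/
theorem stmt5 (p : ℕ) [Fact p.Prime] (hp : p ≠ 2)
    (z : ℤ_[p]ˣ) (hz : ¬ ∃ w : ℤ_[p], w * w = (z : ℤ_[p]))
    (ψ : AddChar ℚ_[p] ℂˣ)
    (hψ1 : ∀ t : ℤ_[p], ψ ((p : ℚ_[p]) * (t : ℚ_[p])) = 1)
    (hψ2 : ∃ t : ℤ_[p], ψ ((t : ℚ_[p])) ≠ 1)
    (n r : ℕ) (hn : 1 ≤ n) (hr : r = (n + 2) / 2)
    (y : ℚ_[p]) (hy : y ≠ 0) (hyv : y.valuation = -(n : ℤ)) :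
    ∀ g : Matrix.SpecialLinearGroup (Fin 2) ℤ_[p],
      ((∀ x ∈ slLevel p r,
          psiBeta p ψ (betaMat p y z) (g * x * g⁻¹) = psiBeta p ψ (betaMat p y z) x) ↔
        ∃ (u v : ℤ_[p]) (h : Matrix.SpecialLinearGroup (Fin 2) ℤ_[p]),
          u ^ 2 - (z : ℤ_[p]) * v ^ 2 = 1 ∧ h ∈ slLevel p (n - r + 1) ∧
          (g : Matrix (Fin 2) (Fin 2) ℤ_[p])
            = !![u, v * (z : ℤ_[p]); v, u] * (h : Matrix (Fin 2) (Fin 2) ℤ_[p])) :=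
  stmt5_general p hp z ψ hψ1 hψ2 n r hn hr y hy hyv
end

section
/- Let n ≥ 1, r = ⌊(n+2)/2⌋, β = [[0, yz],[y, 0]] ∈ M₂(F) with v(y) = −n, and ψ_β(x) = ψ(tr(β(x−1))) for x ∈ SL₂^r(ℤ_p). Suppose φ : T → ℂ^× is a group homomorphism such that φ(t) = ψ_β(t) for all t ∈ T ∩ SL₂^r(ℤ_p). Then T·SL₂^r(ℤ_p) is a subgroup of SL₂(ℤ_p), and the assignment t·x ↦ φ(t)·ψ_β(x) (t ∈ T, x ∈ SL₂^r(ℤ_p)) is a well-defined group homomorphism T·SL₂^r(ℤ_p) → ℂ^×. -/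
/-!
Write `K = SL₂^r(ℤ_p)`. It is the kernel of reduction modulo `p^r`, hence normal, so `T·K` is a
subgroup. Since `(xx' - 1) = (x - 1) + (x' - 1) + (x - 1)(x' - 1)`, `ψ_β` is a character of `K` as
soon as `ψ(tr(β(x - 1)(x' - 1))) = 1`; the argument lies in `y·p^{2r}ℤ_p ⊆ pℤ_p` because
`2r ≥ n + 1`. As `β` commutes with `T` (both come from `E`), `ψ_β` is invariant under conjugation by
`T`. A character `φ` of `T` and a `T`-invariant character `χ` of a normal subgroup `K` that agree on
`T ∩ K` always glue to the character `tx ↦ φ(t)χ(x)` of `T·K`.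
-/

open Matrix

/-- The embedded norm-one torus `T = {!![u, vz; v, u] : u² - zv² = 1} ⊆ SL₂(ℤ_p)`,
the copy of `E¹` in `SL₂(ℤ_p)`. -/
def TsetSL (p : ℕ) [Fact p.Prime] (z : ℤ_[p]ˣ) :
    Set (Matrix.SpecialLinearGroup (Fin 2) ℤ_[p]) :=
  {g | ∃ u v : ℤ_[p], u ^ 2 - (z : ℤ_[p]) * v ^ 2 = 1 ∧
    (g : Matrix (Fin 2) (Fin 2) ℤ_[p]) = !![u, v * (z : ℤ_[p]); v, u]}

/-- The set `T·SL₂^r(ℤ_p)`. -/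
def TGset (p : ℕ) [Fact p.Prime] (z : ℤ_[p]ˣ) (r : ℕ) :
    Set (Matrix.SpecialLinearGroup (Fin 2) ℤ_[p]) :=
  {g | ∃ t ∈ TsetSL p z, ∃ x ∈ slLevel p r, g = t * x}

section ProductOfSubgroups

variable {G M : Type*} [Group G] [CommGroup M] {T K : Subgroup G} {φ χ : G → M}

theorem mul_apply_eq_mul_apply_of_mul_eq (hφ : ∀ t ∈ T, ∀ t' ∈ T, φ (t * t') = φ t * φ t')
    (hχ : ∀ x ∈ K, ∀ x' ∈ K, χ (x * x') = χ x * χ x') (hφχ : ∀ t ∈ T, t ∈ K → φ t = χ t)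
    {t t' x x' : G} (ht : t ∈ T) (ht' : t' ∈ T) (hx : x ∈ K) (hx' : x' ∈ K)
    (h : t * x = t' * x') : φ t * χ x = φ t' * χ x' := by
  have hs : t'⁻¹ * t = x' * x⁻¹ := by
    rw [inv_mul_eq_iff_eq_mul, ← mul_assoc, ← h, mul_inv_cancel_right]
  have hsT : t'⁻¹ * t ∈ T := T.mul_mem (T.inv_mem ht') ht
  have hsK : t'⁻¹ * t ∈ K := hs ▸ K.mul_mem hx' (K.inv_mem hx)
  calc φ t * χ x = φ t' * φ (t'⁻¹ * t) * χ x := by rw [← hφ _ ht' _ hsT, mul_inv_cancel_left]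
    _ = φ t' * χ (t'⁻¹ * t * x) := by rw [hφχ _ hsT hsK, hχ _ hsK _ hx, mul_assoc]
    _ = φ t' * χ x' := by rw [hs, inv_mul_cancel_right]

theorem exists_mul_eq_mul_and_mul_apply_eq [hK : K.Normal]
    (hφ : ∀ t ∈ T, ∀ t' ∈ T, φ (t * t') = φ t * φ t')
    (hχ : ∀ x ∈ K, ∀ x' ∈ K, χ (x * x') = χ x * χ x')
    (hχT : ∀ t ∈ T, ∀ x, χ (t⁻¹ * x * t) = χ x)
    {t t' x x' : G} (ht : t ∈ T) (ht' : t' ∈ T) (hx : x ∈ K) (hx' : x' ∈ K) :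
    ∃ t'' ∈ T, ∃ x'' ∈ K, t * x * (t' * x') = t'' * x'' ∧
      φ t'' * χ x'' = φ t * χ x * (φ t' * χ x') := by
  have hconj : t'⁻¹ * x * t' ∈ K := hK.conj_mem' x hx t'
  refine ⟨t * t', T.mul_mem ht ht', t'⁻¹ * x * t' * x', K.mul_mem hconj hx', by group, ?_⟩
  rw [hφ _ ht _ ht', hχ _ hconj _ hx', hχT _ ht', mul_mul_mul_comm]

end ProductOfSubgroups

theorem Matrix.dvd_mul_apply {R m n o : Type*} [CommSemiring R] [Fintype n] {a b : R}
    {A : Matrix m n R} {B : Matrix n o R} (hA : ∀ i j, a ∣ A i j) (hB : ∀ i j, b ∣ B i j)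
    (i : m) (j : o) : a * b ∣ (A * B) i j :=
  Finset.dvd_sum fun k _ => mul_dvd_mul (hA i k) (hB k j)

theorem Matrix.trace_mul_conj_of_commute {R n : Type*} [CommRing R] [Fintype n] [DecidableEq n]
    {β g g' X : Matrix n n R} (hβ : Commute β g) (hg : g * g' = 1) :
    trace (β * (g' * X * g)) = trace (β * X) := by
  calc trace (β * (g' * X * g)) = trace (g * (β * g' * X)) := by
        rw [trace_mul_comm g]
        simp only [Matrix.mul_assoc]
    _ = trace (β * X) := by
        rw [← mul_assoc g, ← mul_assoc g, ← hβ.eq, mul_assoc β g g', hg, mul_one]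

theorem AddChar.apply_mul_eq_one_of_pow_dvd {p : ℕ} [Fact p.Prime] {M : Type*} [Monoid M]
    {ψ : AddChar ℚ_[p] M} (hψ : ∀ t : ℤ_[p], ψ (p * t) = 1) {n : ℕ} {y : ℚ_[p]}
    (hy : ‖y‖ ≤ (p : ℝ) ^ n) {c : ℤ_[p]} (hc : (p : ℤ_[p]) ^ (n + 1) ∣ c) : ψ (y * c) = 1 := by
  obtain ⟨d, rfl⟩ := hc
  have hw : ‖(p : ℚ_[p]) ^ n * y‖ ≤ 1 := by
    rw [norm_mul, norm_pow, Padic.norm_p, inv_pow]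
    exact inv_mul_le_one_of_le₀ hy (by positivity)
  let w : ℤ_[p] := ⟨_, hw⟩
  have hw' : (w : ℚ_[p]) = p ^ n * y := rfl
  have hyc : y * ↑((p : ℤ_[p]) ^ (n + 1) * d) = p * ↑(w * d) := by
    rw [PadicInt.coe_mul, PadicInt.coe_mul, PadicInt.coe_pow, PadicInt.coe_natCast, hw']
    ring
  rw [hyc, hψ]

namespace SL2Padic

variable {p : ℕ} [Fact p.Prime]

theorem mem_ker_map_toZModPow_iff {r : ℕ} {x : SpecialLinearGroup (Fin 2) ℤ_[p]} :
    x ∈ (SpecialLinearGroup.map (PadicInt.toZModPow (p := p) r)).ker ↔ x ∈ slLevel p r := by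
  rw [MonoidHom.mem_ker, Matrix.SpecialLinearGroup.ext_iff]
  refine forall₂_congr fun i j => ?_
  rw [← Ideal.mem_span_singleton, ← PadicInt.ker_toZModPow, RingHom.mem_ker, Matrix.sub_apply,
    map_sub, sub_eq_zero]
  by_cases h : i = j <;> simp [Matrix.one_apply, h]

-- `copy` makes membership unfold to `slLevel p r`.
noncomputable def congruenceSubgroup (p : ℕ) [Fact p.Prime] (r : ℕ) :
    Subgroup (SpecialLinearGroup (Fin 2) ℤ_[p]) :=
  (SpecialLinearGroup.map (PadicInt.toZModPow r)).ker.copy (slLevel p r)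
    (Set.ext fun _ => mem_ker_map_toZModPow_iff.symm)

instance (r : ℕ) : (congruenceSubgroup p r).Normal := by
  rw [congruenceSubgroup, Subgroup.copy_eq]
  infer_instance

def torus (p : ℕ) [Fact p.Prime] (z : ℤ_[p]ˣ) : Subgroup (SpecialLinearGroup (Fin 2) ℤ_[p]) where
  carrier := TsetSL p z
  one_mem' := ⟨1, 0, by ring, by simp [Matrix.one_fin_two]⟩
  mul_mem' := by
    rintro _ _ ⟨u, v, huv, hg⟩ ⟨u', v', huv', hg'⟩
    refine ⟨u * u' + z * v * v', u * v' + v * u', ?_, ?_⟩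
    · linear_combination (u' ^ 2 - z * v' ^ 2) * huv + huv'
    · rw [Matrix.SpecialLinearGroup.coe_mul, hg, hg', Matrix.mul_fin_two]
      ring_nf
  inv_mem' := by
    rintro _ ⟨u, v, huv, hg⟩
    refine ⟨u, -v, by linear_combination huv, ?_⟩
    rw [Matrix.SpecialLinearGroup.coe_inv, hg, Matrix.adjugate_fin_two_of, neg_mul]

theorem TGset_eq (z : ℤ_[p]ˣ) (r : ℕ) : TGset p z r = ↑(torus p z ⊔ congruenceSubgroup p r) := by
  rw [Subgroup.mul_normal]
  ext g
  simp only [TGset, Set.mem_mul, SetLike.mem_coe, eq_comm]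
  rfl

theorem psiBeta_eq (ψ : AddChar ℚ_[p] ℂˣ) (β : Matrix (Fin 2) (Fin 2) ℚ_[p])
    (x : SpecialLinearGroup (Fin 2) ℤ_[p]) :
    psiBeta p ψ β x =
      ψ (trace (β * (algebraMap ℤ_[p] ℚ_[p]).mapMatrix (↑x - 1))) := by
  rw [map_sub, map_one]
  rfl

theorem trace_betaMat_mul (y : ℚ_[p]) (z : ℤ_[p]ˣ) (Q : Matrix (Fin 2) (Fin 2) ℤ_[p]) :
    trace (betaMat p y z * (algebraMap ℤ_[p] ℚ_[p]).mapMatrix Q) = y * ↑(z * Q 1 0 + Q 0 1) := by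
  simp only [betaMat, trace_fin_two, mul_apply, Fin.sum_univ_two, RingHom.mapMatrix_apply,
    map_apply, of_apply, cons_val', cons_val_zero, cons_val_one, cons_val_fin_one,
    PadicInt.algebraMap_apply, PadicInt.coe_mul, PadicInt.coe_add]
  ring

theorem betaMat_commute (y : ℚ_[p]) {z : ℤ_[p]ˣ} {t : SpecialLinearGroup (Fin 2) ℤ_[p]}
    (ht : t ∈ TsetSL p z) : Commute (betaMat p y z) ((algebraMap ℤ_[p] ℚ_[p]).mapMatrix t) := by
  obtain ⟨u, v, -, hg⟩ := ht
  rw [commute_iff_eq, eta_fin_two ((algebraMap ℤ_[p] ℚ_[p]).mapMatrix t), betaMat, mul_fin_two,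
    mul_fin_two]
  simp only [hg, RingHom.mapMatrix_apply, map_apply, of_apply, cons_val', cons_val_zero,
    cons_val_one, cons_val_fin_one, PadicInt.algebraMap_apply, PadicInt.coe_mul]
  ring_nf

theorem psiBeta_mul {ψ : AddChar ℚ_[p] ℂˣ} (hψ : ∀ t : ℤ_[p], ψ (p * t) = 1) {n r : ℕ}
    (hnr : n + 1 ≤ 2 * r) {y : ℚ_[p]} (hy : ‖y‖ ≤ (p : ℝ) ^ n) (z : ℤ_[p]ˣ)
    {x x' : SpecialLinearGroup (Fin 2) ℤ_[p]} (hx : x ∈ slLevel p r) (hx' : x' ∈ slLevel p r) :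
    psiBeta p ψ (betaMat p y z) (x * x') =
      psiBeta p ψ (betaMat p y z) x * psiBeta p ψ (betaMat p y z) x' := by
  have hprod : ((x * x' : SpecialLinearGroup (Fin 2) ℤ_[p]) : Matrix (Fin 2) (Fin 2) ℤ_[p]) - 1 =
      (x - 1) + (x' - 1) + (x - 1) * (x' - 1) := by
    rw [Matrix.SpecialLinearGroup.coe_mul]
    noncomm_ring
  set A := (x : Matrix (Fin 2) (Fin 2) ℤ_[p]) - 1
  set B := (x' : Matrix (Fin 2) (Fin 2) ℤ_[p]) - 1
  have hAB : ∀ i j, (p : ℤ_[p]) ^ (n + 1) ∣ (A * B) i j := fun i j =>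
    (pow_dvd_pow _ hnr).trans (by rw [two_mul, pow_add]; exact Matrix.dvd_mul_apply hx hx' i j)
  rw [psiBeta_eq, psiBeta_eq, psiBeta_eq, hprod, map_add, map_add, mul_add, mul_add, trace_add,
    trace_add, AddChar.map_add_eq_mul, AddChar.map_add_eq_mul, trace_betaMat_mul _ _ (A * B),
    AddChar.apply_mul_eq_one_of_pow_dvd hψ hy
      (dvd_add (dvd_mul_of_dvd_right (hAB 1 0) _) (hAB 0 1)), mul_one]

theorem psiBeta_conj (ψ : AddChar ℚ_[p] ℂˣ) (y : ℚ_[p]) {z : ℤ_[p]ˣ}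
    {t : SpecialLinearGroup (Fin 2) ℤ_[p]} (ht : t ∈ TsetSL p z)
    (x : SpecialLinearGroup (Fin 2) ℤ_[p]) :
    psiBeta p ψ (betaMat p y z) (t⁻¹ * x * t) = psiBeta p ψ (betaMat p y z) x := by
  let f := (algebraMap ℤ_[p] ℚ_[p]).mapMatrix (m := Fin 2)
  have hconj : ((t⁻¹ * x * t : SpecialLinearGroup (Fin 2) ℤ_[p]) : Matrix (Fin 2) (Fin 2) ℤ_[p]) -
      1 = t⁻¹ * ((x : Matrix (Fin 2) (Fin 2) ℤ_[p]) - 1) * t := by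
    rw [Matrix.SpecialLinearGroup.coe_mul, Matrix.SpecialLinearGroup.coe_mul, mul_sub, sub_mul,
      mul_one, ← Matrix.SpecialLinearGroup.coe_mul t⁻¹ t, inv_mul_cancel,
      Matrix.SpecialLinearGroup.coe_one]
  have hinv : f t * f ↑t⁻¹ = 1 := by
    rw [← map_mul, ← Matrix.SpecialLinearGroup.coe_mul, mul_inv_cancel,
      Matrix.SpecialLinearGroup.coe_one, map_one]
  rw [psiBeta_eq, psiBeta_eq, hconj, map_mul, map_mul,
    Matrix.trace_mul_conj_of_commute (betaMat_commute y ht) hinv]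

end SL2Padic

open SL2Padic

theorem stmt6_general (p : ℕ) [Fact p.Prime]
    (z : ℤ_[p]ˣ)
    (ψ : AddChar ℚ_[p] ℂˣ)
    (hψ1 : ∀ t : ℤ_[p], ψ ((p : ℚ_[p]) * (t : ℚ_[p])) = 1)
    (n r : ℕ) (hr : r = (n + 2) / 2)
    (y : ℚ_[p]) (hy : y ≠ 0) (hyv : y.valuation = -(n : ℤ))
    (φ : Matrix.SpecialLinearGroup (Fin 2) ℤ_[p] → ℂˣ)
    (hφmul : ∀ t ∈ TsetSL p z, ∀ t' ∈ TsetSL p z, φ (t * t') = φ t * φ t')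
    (hφag : ∀ t ∈ TsetSL p z, t ∈ slLevel p r → φ t = psiBeta p ψ (betaMat p y z) t) :
    ((1 : Matrix.SpecialLinearGroup (Fin 2) ℤ_[p]) ∈ TGset p z r) ∧
    (∀ a ∈ TGset p z r, ∀ b ∈ TGset p z r, a * b ∈ TGset p z r) ∧
    (∀ a ∈ TGset p z r, a⁻¹ ∈ TGset p z r) ∧
    (∀ t ∈ TsetSL p z, ∀ x ∈ slLevel p r, ∀ t' ∈ TsetSL p z, ∀ x' ∈ slLevel p r,
      t * x = t' * x' →
        φ t * psiBeta p ψ (betaMat p y z) x = φ t' * psiBeta p ψ (betaMat p y z) x') ∧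
    (∀ t ∈ TsetSL p z, ∀ x ∈ slLevel p r, ∀ t' ∈ TsetSL p z, ∀ x' ∈ slLevel p r,
      ∃ t'' ∈ TsetSL p z, ∃ x'' ∈ slLevel p r,
        t * x * (t' * x') = t'' * x'' ∧
        φ t'' * psiBeta p ψ (betaMat p y z) x''
          = (φ t * psiBeta p ψ (betaMat p y z) x) * (φ t' * psiBeta p ψ (betaMat p y z) x')) := by
  have hnr : n + 1 ≤ 2 * r := by omega
  have hy_norm : ‖y‖ ≤ (p : ℝ) ^ n := by
    rw [Padic.norm_eq_zpow_neg_valuation hy, hyv, neg_neg, zpow_natCast]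
  have hχ : ∀ x ∈ slLevel p r, ∀ x' ∈ slLevel p r, psiBeta p ψ (betaMat p y z) (x * x') =
      psiBeta p ψ (betaMat p y z) x * psiBeta p ψ (betaMat p y z) x' :=
    fun _ hx _ hx' => psiBeta_mul hψ1 hnr hy_norm z hx hx'
  rw [TGset_eq]
  refine ⟨Subgroup.one_mem _, fun _ ha _ hb => Subgroup.mul_mem _ ha hb,
    fun _ ha => Subgroup.inv_mem _ ha, ?_, ?_⟩
  · exact fun _ ht _ hx _ ht' _ hx' =>
      mul_apply_eq_mul_apply_of_mul_eq (T := torus p z) (K := congruenceSubgroup p r)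
        hφmul hχ hφag ht ht' hx hx'
  · exact fun _ ht _ hx _ ht' _ hx' =>
      exists_mul_eq_mul_and_mul_apply_eq (T := torus p z) (K := congruenceSubgroup p r)
        hφmul hχ (fun _ ht => psiBeta_conj ψ y ht) ht ht' hx hx'

/-- with `n ≥ 1`, `r = ⌊(n+2)/2⌋`, `β = !![0, yz; y, 0]`, `v(y) = -n`, and
`φ : T → ℂˣ` a homomorphism agreeing with `ψ_β` on `T ∩ SL₂^r(ℤ_p)`: the set `T·SL₂^r(ℤ_p)`
is a subgroup of `SL₂(ℤ_p)`, and `t·x ↦ φ(t)·ψ_β(x)` is a well-defined group homomorphism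
`T·SL₂^r(ℤ_p) → ℂˣ`. -/
theorem stmt6 (p : ℕ) [Fact p.Prime] (hp : p ≠ 2)
    (z : ℤ_[p]ˣ) (hz : ¬ ∃ w : ℤ_[p], w * w = (z : ℤ_[p]))
    (ψ : AddChar ℚ_[p] ℂˣ)
    (hψ1 : ∀ t : ℤ_[p], ψ ((p : ℚ_[p]) * (t : ℚ_[p])) = 1)
    (hψ2 : ∃ t : ℤ_[p], ψ ((t : ℚ_[p])) ≠ 1)
    (n r : ℕ) (hn : 1 ≤ n) (hr : r = (n + 2) / 2)
    (y : ℚ_[p]) (hy : y ≠ 0) (hyv : y.valuation = -(n : ℤ))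
    (φ : Matrix.SpecialLinearGroup (Fin 2) ℤ_[p] → ℂˣ)
    (hφmul : ∀ t ∈ TsetSL p z, ∀ t' ∈ TsetSL p z, φ (t * t') = φ t * φ t')
    (hφag : ∀ t ∈ TsetSL p z, t ∈ slLevel p r → φ t = psiBeta p ψ (betaMat p y z) t) :
    ((1 : Matrix.SpecialLinearGroup (Fin 2) ℤ_[p]) ∈ TGset p z r) ∧
    (∀ a ∈ TGset p z r, ∀ b ∈ TGset p z r, a * b ∈ TGset p z r) ∧
    (∀ a ∈ TGset p z r, a⁻¹ ∈ TGset p z r) ∧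
    (∀ t ∈ TsetSL p z, ∀ x ∈ slLevel p r, ∀ t' ∈ TsetSL p z, ∀ x' ∈ slLevel p r,
      t * x = t' * x' →
        φ t * psiBeta p ψ (betaMat p y z) x = φ t' * psiBeta p ψ (betaMat p y z) x') ∧
    (∀ t ∈ TsetSL p z, ∀ x ∈ slLevel p r, ∀ t' ∈ TsetSL p z, ∀ x' ∈ slLevel p r,
      ∃ t'' ∈ TsetSL p z, ∃ x'' ∈ slLevel p r,
        t * x * (t' * x') = t'' * x'' ∧
        φ t'' * psiBeta p ψ (betaMat p y z) x''
          = (φ t * psiBeta p ψ (betaMat p y z) x) * (φ t' * psiBeta p ψ (betaMat p y z) x')) :=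
  stmt6_general p z ψ hψ1 n r hr y hy hyv φ hφmul hφag
end

section
/- Let n ≥ 4 be an integer divisible by 4 and set r = n/2 + 1 (so r is odd). Then D¹_{r−1} ⊆ E¹·D¹_r·D¹_{n+1}; that is, every h ∈ D¹ with v_D(h − 1) ≥ n/2 can be written as h = e·g·u with e ∈ E¹ (embedded in D as x_{λ,0} with λ·λ̄ = 1), g ∈ D¹_{n/2+1}, and u ∈ D¹_{n+1}. Consequently (E¹·D¹_{r−1})/D¹_{n+1} = (E¹·D¹_r)/D¹_{n+1}. -/
noncomputable section
open Matrix

/-- The image of `p` in `E`. -/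
def pE (p : ℕ) [Fact p.Prime] (E : Type) [Field E] [Algebra ℚ_[p] E] : E :=
  algebraMap ℚ_[p] E (p : ℚ_[p])

/-- The ring of integers `O_E = ℤ_p + ℤ_p·α` of the unramified quadratic extension
`E = F(α)`, as a set. -/
def OE (p : ℕ) [Fact p.Prime] (E : Type) [Field E] [Algebra ℚ_[p] E] (α : E) : Set E :=
  {x | ∃ a b : ℤ_[p],
    x = algebraMap ℚ_[p] E (a : ℚ_[p]) + algebraMap ℚ_[p] E (b : ℚ_[p]) * α}

/-- The element `x_{a,b} = !![a, b; p·conj b, conj a]` of the quaternion division algebra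
`D ⊆ M₂(E)`. -/
def qmat (p : ℕ) [Fact p.Prime] (E : Type) [Field E] [Algebra ℚ_[p] E]
    (conj : E → E) (a b : E) : Matrix (Fin 2) (Fin 2) E :=
  !![a, b; pE p E * conj b, conj a]

/-- The uniformizer `δ = x_{0,1}` of `D`, with `δ² = p`. -/
def deltaM (p : ℕ) [Fact p.Prime] (E : Type) [Field E] [Algebra ℚ_[p] E] :
    Matrix (Fin 2) (Fin 2) E :=
  !![0, 1; pE p E, 0]

/-- The maximal order `O_D = {x_{a,b} : a, b ∈ O_E}` of `D`, as a set. -/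
def ODset (p : ℕ) [Fact p.Prime] (E : Type) [Field E] [Algebra ℚ_[p] E]
    (α : E) (conj : E → E) : Set (Matrix (Fin 2) (Fin 2) E) :=
  {m | ∃ a b : E, a ∈ OE p E α ∧ b ∈ OE p E α ∧ m = qmat p E conj a b}

/-- The norm-one group `D¹ = {x ∈ D : det x = 1}`, as a set. -/
def D1set (p : ℕ) [Fact p.Prime] (E : Type) [Field E] [Algebra ℚ_[p] E]
    (conj : E → E) : Set (Matrix (Fin 2) (Fin 2) E) :=
  {m | (∃ a b : E, m = qmat p E conj a b) ∧ m.det = 1}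

/-- `vDge p E α conj r m` says `v_D(m) ≥ r`, i.e. `m ∈ δ^r·O_D = P_D^r`. -/
def vDge (p : ℕ) [Fact p.Prime] (E : Type) [Field E] [Algebra ℚ_[p] E]
    (α : E) (conj : E → E) (r : ℕ) (m : Matrix (Fin 2) (Fin 2) E) : Prop :=
  ∃ yy ∈ ODset p E α conj, m = deltaM p E ^ r * yy

/-- `x ∈ P_E = p·O_E`. -/
def inPE (p : ℕ) [Fact p.Prime] (E : Type) [Field E] [Algebra ℚ_[p] E]
    (α : E) (x : E) : Prop :=
  ∃ c ∈ OE p E α, x = pE p E * c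

/-!
Write `n = 4k` and `h = 1 + δ^{2k}·x_{a,b} = x_{A,B}` with `A = 1 + p^k a`, `B = p^k b`.
Since `det h = 1`, the norm `A·Ā = 1 + p^{2k+1}·b·b̄` lies in `1 + p^{2k+1}ℤ_p`, so for odd `p`
Hensel's lemma gives `A·Ā = s²` with `s ∈ 1 + p^{2k+1}ℤ_p`. Then `λ = A/s ∈ E¹`, and
`g = x_{λ,0}⁻¹·h = x_{s, λ̄B}` has `v_D(g - 1) ≥ 2k + 1`, so one may even take `u = 1`.
The reverse inclusion of cosets is just `D¹_r ⊆ D¹_{r-1}`.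
-/

namespace PadicInt

variable {p : ℕ} [Fact p.Prime]

lemma norm_two_eq_one (hp : p ≠ 2) : ‖(2 : ℤ_[p])‖ = 1 := by
  have hcop : p.Coprime 2 := (Nat.coprime_primes Fact.out Nat.prime_two).2 hp
  exact_mod_cast norm_natCast_eq_one_iff.2 hcop

lemma norm_p_pow_mul_lt_one {m : ℕ} (hm : m ≠ 0) (t : ℤ_[p]) : ‖(p : ℤ_[p]) ^ m * t‖ < 1 :=
  calc ‖(p : ℤ_[p]) ^ m * t‖ ≤ ‖(p : ℤ_[p])‖ ^ m := by
        rw [norm_mul, norm_pow]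
        exact mul_le_of_le_one_right (by positivity) (norm_le_one t)
    _ < 1 := pow_lt_one₀ (norm_nonneg _) (norm_natCast_lt_one_iff.2 dvd_rfl) hm

lemma isUnit_add_of_norm_lt_one {u x : ℤ_[p]} (hu : IsUnit u) (hx : ‖x‖ < 1) :
    IsUnit (u + x) := by
  rw [isUnit_iff] at hu ⊢
  rw [norm_add_eq_max_of_ne (by rw [hu]; exact hx.ne'), hu]
  exact max_eq_left hx.le

lemma exists_unit_sq_eq_one_add_p_pow_mul (hp : p ≠ 2) {m : ℕ} (hm : m ≠ 0) (t : ℤ_[p]) :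
    ∃ s : ℤ_[p], IsUnit s ∧ s * s = 1 + (p : ℤ_[p]) ^ m * t ∧
      ∃ c : ℤ_[p], s = 1 + (p : ℤ_[p]) ^ m * c := by
  have hsmall := norm_p_pow_mul_lt_one hm t
  set F : Polynomial ℤ_[p] := .X ^ 2 - .C (1 + (p : ℤ_[p]) ^ m * t)
  have hF1 : F.aeval (1 : ℤ_[p]) = -((p : ℤ_[p]) ^ m * t) := by
    simp only [F, map_sub, map_pow, Polynomial.aeval_X, Polynomial.aeval_C,
      Algebra.algebraMap_self, RingHom.id_apply]
    ring
  have hF' : F.derivative.aeval (1 : ℤ_[p]) = 2 := by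
    simp only [F, Polynomial.derivative_sub, Polynomial.derivative_C, Polynomial.derivative_X_pow,
      sub_zero, map_mul, map_pow, Polynomial.aeval_X, Polynomial.aeval_C]
    norm_num
  have hF : ‖F.aeval (1 : ℤ_[p])‖ < ‖F.derivative.aeval (1 : ℤ_[p])‖ ^ 2 := by
    rwa [hF1, hF', norm_neg, norm_two_eq_one hp, one_pow]
  obtain ⟨s, hroot, hclose, -, -⟩ := hensels_lemma hF
  replace hroot : s * s = 1 + (p : ℤ_[p]) ^ m * t := by
    simp only [F, map_sub, map_pow, Polynomial.aeval_X, Polynomial.aeval_C,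
      Algebra.algebraMap_self, RingHom.id_apply, sub_eq_zero] at hroot
    rw [← hroot, sq]
  rw [hF', norm_two_eq_one hp] at hclose
  have hs : IsUnit s := by simpa using isUnit_add_of_norm_lt_one isUnit_one hclose
  obtain ⟨v, hv⟩ : IsUnit (s + 1) := by
    convert isUnit_add_of_norm_lt_one (isUnit_iff.2 (norm_two_eq_one hp)) hclose using 1
    ring
  refine ⟨s, hs, hroot, t * ↑v⁻¹, ?_⟩
  have hfactor : (s - 1) * ↑v = (p : ℤ_[p]) ^ m * t := by
    rw [hv]; linear_combination hroot
  rw [← mul_assoc, ← hfactor, mul_assoc, Units.mul_inv, mul_one, add_sub_cancel]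

end PadicInt

section Quaternion

variable {p : ℕ} [Fact p.Prime] {E : Type} [Field E] [Algebra ℚ_[p] E]

lemma deltaM_pow_two_mul (k : ℕ) :
    deltaM p E ^ (2 * k) = pE p E ^ k • (1 : Matrix (Fin 2) (Fin 2) E) := by
  have hsq : deltaM p E ^ 2 = pE p E • (1 : Matrix (Fin 2) (Fin 2) E) := by
    ext i j
    fin_cases i <;> fin_cases j <;> simp [deltaM, sq, Matrix.mul_apply]
  rw [pow_mul, hsq, smul_pow, one_pow]

variable (conj : E →ₐ[ℚ_[p]] E)

lemma conj_pE : conj (pE p E) = pE p E :=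
  conj.commutes _

lemma qmat_zero_zero : qmat p E conj 0 0 = 0 := by
  ext i j
  fin_cases i <;> fin_cases j <;> simp [qmat]

lemma qmat_one_zero : qmat p E conj 1 0 = 1 := by
  ext i j
  fin_cases i <;> fin_cases j <;> simp [qmat]

lemma one_add_qmat (a b : E) : 1 + qmat p E conj a b = qmat p E conj (1 + a) b := by
  ext i j
  fin_cases i <;> fin_cases j <;> simp [qmat]

lemma qmat_sub_one (a b : E) : qmat p E conj a b - 1 = qmat p E conj (a - 1) b := by
  ext i j
  fin_cases i <;> fin_cases j <;> simp [qmat]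

lemma smul_qmat {c : E} (hc : conj c = c) (a b : E) :
    c • qmat p E conj a b = qmat p E conj (c * a) (c * b) := by
  ext i j
  fin_cases i <;> fin_cases j <;> simp [qmat, hc, mul_left_comm]

lemma qmat_mul_qmat_zero (lam a b : E) :
    qmat p E conj lam 0 * qmat p E conj a b = qmat p E conj (lam * a) (lam * b) := by
  ext i j
  fin_cases i <;> fin_cases j <;> simp [qmat, Matrix.mul_apply, mul_left_comm]

lemma det_qmat (a b : E) :
    (qmat p E conj a b).det = a * conj a - pE p E * (b * conj b) := by
  simp [qmat, Matrix.det_fin_two_of]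
  ring

lemma deltaM_mul_qmat (hinv : Function.Involutive conj) (a b : E) :
    deltaM p E * qmat p E conj a b = qmat p E conj (pE p E * conj b) (conj a) := by
  ext i j
  fin_cases i <;> fin_cases j <;> simp [qmat, deltaM, Matrix.mul_apply, conj_pE, hinv _]

lemma qmat_eq_qmat_zero_mul {lam : E} (hlam : lam * conj lam = 1) (a b : E) :
    qmat p E conj a b = qmat p E conj lam 0 * qmat p E conj (conj lam * a) (conj lam * b) := by
  rw [qmat_mul_qmat_zero, ← mul_assoc, ← mul_assoc, hlam, one_mul, one_mul]

end Quaternion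

section Integers

variable {p : ℕ} [Fact p.Prime] {E : Type} [Field E] [Algebra ℚ_[p] E] {α : E}

lemma algebraMap_mem_OE (c : ℤ_[p]) : algebraMap ℚ_[p] E c ∈ OE p E α :=
  ⟨c, 0, by simp⟩

lemma zero_mem_OE : (0 : E) ∈ OE p E α := by
  simpa using algebraMap_mem_OE (E := E) (α := α) (0 : ℤ_[p])

lemma one_mem_OE : (1 : E) ∈ OE p E α := by
  simpa using algebraMap_mem_OE (E := E) (α := α) (1 : ℤ_[p])

lemma pE_pow_mem_OE (k : ℕ) : pE p E ^ k ∈ OE p E α := by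
  simpa [pE] using algebraMap_mem_OE (E := E) (α := α) ((p : ℤ_[p]) ^ k)

lemma pE_mem_OE : pE p E ∈ OE p E α := by
  simpa using pE_pow_mem_OE (E := E) (α := α) 1

lemma inv_algebraMap_mem_OE {s : ℤ_[p]} (hs : IsUnit s) :
    (algebraMap ℚ_[p] E s)⁻¹ ∈ OE p E α := by
  obtain ⟨u, rfl⟩ := hs
  have hinv : ((u : ℤ_[p]) : ℚ_[p])⁻¹ = ((u⁻¹ : ℤ_[p]ˣ) : ℤ_[p]) :=
    inv_eq_of_mul_eq_one_right (by rw [← PadicInt.coe_mul, Units.mul_inv, PadicInt.coe_one])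
  rw [← map_inv₀, hinv]
  exact algebraMap_mem_OE _

lemma add_mem_OE {x y : E} (hx : x ∈ OE p E α) (hy : y ∈ OE p E α) : x + y ∈ OE p E α := by
  obtain ⟨a, b, rfl⟩ := hx
  obtain ⟨c, d, rfl⟩ := hy
  exact ⟨a + c, b + d, by push_cast; ring⟩

lemma mul_mem_OE {z : ℤ_[p]ˣ} (hα : α * α = algebraMap ℚ_[p] E ((z : ℤ_[p]) : ℚ_[p]))
    {x y : E} (hx : x ∈ OE p E α) (hy : y ∈ OE p E α) : x * y ∈ OE p E α := by
  obtain ⟨a, b, rfl⟩ := hx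
  obtain ⟨c, d, rfl⟩ := hy
  refine ⟨a * c + b * d * z, a * d + b * c, ?_⟩
  push_cast
  linear_combination algebraMap ℚ_[p] E (b : ℚ_[p]) * algebraMap ℚ_[p] E (d : ℚ_[p]) * hα

variable {conj : E →ₐ[ℚ_[p]] E}

lemma conj_mem_OE (hconj : conj α = -α) {x : E} (hx : x ∈ OE p E α) : conj x ∈ OE p E α := by
  obtain ⟨a, b, rfl⟩ := hx
  exact ⟨a, -b, by simp [hconj]⟩

lemma exists_mul_conj_eq_algebraMap {z : ℤ_[p]ˣ}
    (hα : α * α = algebraMap ℚ_[p] E ((z : ℤ_[p]) : ℚ_[p])) (hconj : conj α = -α)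
    {x : E} (hx : x ∈ OE p E α) : ∃ t : ℤ_[p], x * conj x = algebraMap ℚ_[p] E t := by
  obtain ⟨a, b, rfl⟩ := hx
  refine ⟨a * a - b * b * z, ?_⟩
  simp only [map_add, map_mul, AlgHom.commutes, hconj]
  push_cast
  linear_combination -(algebraMap ℚ_[p] E (b : ℚ_[p]) * algebraMap ℚ_[p] E (b : ℚ_[p])) * hα

lemma conj_involutive (hconj : conj α = -α)
    (hspan : ∀ x : E, ∃ a b : ℚ_[p], x = algebraMap ℚ_[p] E a + algebraMap ℚ_[p] E b * α) :
    Function.Involutive conj := by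
  intro x
  obtain ⟨a, b, rfl⟩ := hspan x
  simp [hconj]

end Integers

section Filtration

variable {p : ℕ} [Fact p.Prime] {E : Type} [Field E] [Algebra ℚ_[p] E] {α : E}
  {conj : E →ₐ[ℚ_[p]] E}

lemma one_mem_D1set : (1 : Matrix (Fin 2) (Fin 2) E) ∈ D1set p E conj :=
  ⟨⟨1, 0, (qmat_one_zero conj).symm⟩, det_one⟩

lemma vDge_zero_right (r : ℕ) : vDge p E α conj r 0 :=
  ⟨0, ⟨0, 0, zero_mem_OE, zero_mem_OE, (qmat_zero_zero conj).symm⟩, (mul_zero _).symm⟩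

lemma vDge_of_vDge_succ {z : ℤ_[p]ˣ} (hα : α * α = algebraMap ℚ_[p] E ((z : ℤ_[p]) : ℚ_[p]))
    (hconj : conj α = -α) (hinv : Function.Involutive conj) {r : ℕ}
    {m : Matrix (Fin 2) (Fin 2) E} (hm : vDge p E α conj (r + 1) m) : vDge p E α conj r m := by
  obtain ⟨_, ⟨a, b, ha, hb, rfl⟩, rfl⟩ := hm
  refine ⟨_, ⟨_, _, mul_mem_OE hα pE_mem_OE (conj_mem_OE hconj hb), conj_mem_OE hconj ha, rfl⟩,
    ?_⟩
  rw [pow_succ, mul_assoc, deltaM_mul_qmat conj hinv]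

lemma exists_eq_qmat_of_vDge_two_mul {k : ℕ} {h : Matrix (Fin 2) (Fin 2) E}
    (hh : vDge p E α conj (2 * k) (h - 1)) :
    ∃ a ∈ OE p E α, ∃ b ∈ OE p E α, h = qmat p E conj (1 + pE p E ^ k * a) (pE p E ^ k * b) := by
  obtain ⟨_, ⟨a, b, ha, hb, rfl⟩, hh⟩ := hh
  refine ⟨a, ha, b, hb, ?_⟩
  rw [← one_add_qmat, ← smul_qmat conj (by simp [conj_pE]), eq_add_of_sub_eq' hh,
    deltaM_pow_two_mul, smul_mul_assoc, one_mul]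

lemma vDge_two_mul_add_one_qmat (hconj : conj α = -α) (hinv : Function.Involutive conj)
    (k : ℕ) {a b : E} (ha : a ∈ OE p E α) (hb : b ∈ OE p E α) :
    vDge p E α conj (2 * k + 1) (qmat p E conj (pE p E ^ (k + 1) * a) (pE p E ^ k * b)) := by
  refine ⟨qmat p E conj (conj b) (conj a),
    ⟨_, _, conj_mem_OE hconj hb, conj_mem_OE hconj ha, rfl⟩, ?_⟩
  rw [pow_succ (deltaM p E), mul_assoc, deltaM_mul_qmat conj hinv, deltaM_pow_two_mul,
    smul_mul_assoc, one_mul, smul_qmat conj (by simp [conj_pE]), hinv a, hinv b, pow_succ,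
    mul_assoc]

end Filtration

section Factorization

variable {p : ℕ} [Fact p.Prime] {E : Type} [Field E] [Algebra ℚ_[p] E] {α : E}
  {conj : E →ₐ[ℚ_[p]] E}

lemma algebraMap_one_add_p_pow_mul (m : ℕ) (c : ℤ_[p]) :
    algebraMap ℚ_[p] E ((1 + (p : ℤ_[p]) ^ m * c : ℤ_[p]) : ℚ_[p])
      = 1 + pE p E ^ m * algebraMap ℚ_[p] E (c : ℚ_[p]) := by
  simp [pE]

lemma exists_normOne_conj_mul_eq (hp : p ≠ 2) {z : ℤ_[p]ˣ}
    (hα : α * α = algebraMap ℚ_[p] E ((z : ℤ_[p]) : ℚ_[p])) {m : ℕ} (hm : m ≠ 0)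
    {A : E} (hA : A ∈ OE p E α) {t : ℤ_[p]}
    (hN : A * conj A = algebraMap ℚ_[p] E ((1 + (p : ℤ_[p]) ^ m * t : ℤ_[p]) : ℚ_[p])) :
    ∃ lam ∈ OE p E α, lam * conj lam = 1 ∧ ∃ c : ℤ_[p],
      conj lam * A = algebraMap ℚ_[p] E ((1 + (p : ℤ_[p]) ^ m * c : ℤ_[p]) : ℚ_[p]) := by
  obtain ⟨s, hs, hss, c, hc⟩ := PadicInt.exists_unit_sq_eq_one_add_p_pow_mul hp hm t
  set σ := algebraMap ℚ_[p] E (s : ℚ_[p])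
  have hσ : σ ≠ 0 := by simpa [σ] using hs.ne_zero
  have hNσ : A * conj A = σ * σ := by rw [hN, ← hss, PadicInt.coe_mul, map_mul]
  have hconjσ : conj σ⁻¹ = σ⁻¹ := by rw [map_inv₀, conj.commutes]
  refine ⟨A * σ⁻¹, mul_mem_OE hα hA (inv_algebraMap_mem_OE hs), ?_, c, ?_⟩
  · rw [map_mul, hconjσ]
    field_simp
    linear_combination hNσ
  · rw [map_mul, hconjσ, ← hc]
    field_simp
    linear_combination hNσ

theorem exists_normOne_mul_of_vDge_two_mul (hp : p ≠ 2) {z : ℤ_[p]ˣ}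
    (hα : α * α = algebraMap ℚ_[p] E ((z : ℤ_[p]) : ℚ_[p])) (hconj : conj α = -α)
    (hinv : Function.Involutive conj) (k : ℕ) {h : Matrix (Fin 2) (Fin 2) E}
    (hh : h ∈ D1set p E conj) (hv : vDge p E α conj (2 * k) (h - 1)) :
    ∃ lam : E, lam * conj lam = 1 ∧
      ∃ g ∈ D1set p E conj, vDge p E α conj (2 * k + 1) (g - 1) ∧ h = qmat p E conj lam 0 * g := by
  obtain ⟨a, ha, b, hb, rfl⟩ := exists_eq_qmat_of_vDge_two_mul hv
  set A := 1 + pE p E ^ k * a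
  set B := pE p E ^ k * b
  obtain ⟨t, ht⟩ := exists_mul_conj_eq_algebraMap hα hconj hb
  have hN : A * conj A
      = algebraMap ℚ_[p] E ((1 + (p : ℤ_[p]) ^ (2 * k + 1) * t : ℤ_[p]) : ℚ_[p]) := by
    have hdet := hh.2
    rw [det_qmat, map_mul, map_pow, conj_pE] at hdet
    rw [algebraMap_one_add_p_pow_mul, ← ht]
    linear_combination hdet
  have hA : A ∈ OE p E α := add_mem_OE one_mem_OE (mul_mem_OE hα (pE_pow_mem_OE k) ha)
  obtain ⟨lam, hlamO, hlam, c, hc⟩ := exists_normOne_conj_mul_eq hp hα (by omega) hA hN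
  have hfac := qmat_eq_qmat_zero_mul conj hlam A B
  refine ⟨lam, hlam, _, ⟨⟨_, _, rfl⟩, ?_⟩, ?_, hfac⟩
  · have hdet := hh.2
    rwa [hfac, det_mul, det_qmat conj lam, hlam, map_zero, mul_zero, mul_zero, sub_zero,
      one_mul] at hdet
  · have hσ : conj lam * A - 1 = pE p E ^ (k + 1) * (pE p E ^ k * algebraMap ℚ_[p] E c) := by
      rw [hc, algebraMap_one_add_p_pow_mul]
      ring
    rw [qmat_sub_one, hσ,
      show conj lam * B = pE p E ^ k * (conj lam * b) from mul_left_comm ..]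
    exact vDge_two_mul_add_one_qmat hconj hinv k
      (mul_mem_OE hα (pE_pow_mem_OE k) (algebraMap_mem_OE c))
      (mul_mem_OE hα (conj_mem_OE hconj hlamO) hb)

end Factorization

theorem stmt10_general (p : ℕ) [Fact p.Prime] (hp : p ≠ 2)
    (z : ℤ_[p]ˣ)
    (E : Type) [Field E] [Algebra ℚ_[p] E] (α : E)
    (hα : α * α = algebraMap ℚ_[p] E ((z : ℤ_[p]) : ℚ_[p]))
    (hspan : ∀ x : E, ∃ a b : ℚ_[p], x = algebraMap ℚ_[p] E a + algebraMap ℚ_[p] E b * α)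
    (conj : E →ₐ[ℚ_[p]] E) (hconj : conj α = -α)
    (n : ℕ) (hn4 : 4 ∣ n) :
    -- main inclusion D¹_{r-1} ⊆ E¹·D¹_r·D¹_{n+1}, r - 1 = n/2
    (∀ h ∈ D1set p E conj, vDge p E α conj (n / 2) (h - 1) →
      ∃ lam : E, lam * conj lam = 1 ∧
        ∃ g ∈ D1set p E conj, vDge p E α conj (n / 2 + 1) (g - 1) ∧
          ∃ u ∈ D1set p E conj, vDge p E α conj (n + 1) (u - 1) ∧
            h = qmat p E conj lam 0 * g * u) ∧
    -- hence (E¹·D¹_{r-1})/D¹_{n+1} ⊆ (E¹·D¹_r)/D¹_{n+1}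
    (∀ lam0 : E, lam0 * conj lam0 = 1 →
      ∀ h ∈ D1set p E conj, vDge p E α conj (n / 2) (h - 1) →
        ∃ lam : E, lam * conj lam = 1 ∧
          ∃ g ∈ D1set p E conj, vDge p E α conj (n / 2 + 1) (g - 1) ∧
            ∃ u ∈ D1set p E conj, vDge p E α conj (n + 1) (u - 1) ∧
              qmat p E conj lam0 0 * h = qmat p E conj lam 0 * g * u) ∧
    -- and (E¹·D¹_r)/D¹_{n+1} ⊆ (E¹·D¹_{r-1})/D¹_{n+1}
    (∀ lam0 : E, lam0 * conj lam0 = 1 →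
      ∀ g ∈ D1set p E conj, vDge p E α conj (n / 2 + 1) (g - 1) →
        ∃ lam : E, lam * conj lam = 1 ∧
          ∃ h ∈ D1set p E conj, vDge p E α conj (n / 2) (h - 1) ∧
            ∃ u ∈ D1set p E conj, vDge p E α conj (n + 1) (u - 1) ∧
              qmat p E conj lam0 0 * g = qmat p E conj lam 0 * h * u) := by
  have hinv := conj_involutive hconj hspan
  obtain ⟨k, rfl⟩ := hn4
  rw [show 4 * k / 2 = 2 * k by omega]
  have hone : vDge p E α conj (4 * k + 1) (1 - 1) := by
    rw [sub_self]
    exact vDge_zero_right _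
  have hfactor := fun h (hh : h ∈ D1set p E conj) hv ↦
    exists_normOne_mul_of_vDge_two_mul hp hα hconj hinv k hh hv
  refine ⟨fun h hh hv ↦ ?_, fun lam₀ hlam₀ h hh hv ↦ ?_, fun lam₀ hlam₀ g hg hgv ↦
    ⟨lam₀, hlam₀, g, hg, vDge_of_vDge_succ hα hconj hinv hgv, 1, one_mem_D1set, hone,
      (mul_one _).symm⟩⟩
  · obtain ⟨lam, hlam, g, hg, hgv, rfl⟩ := hfactor h hh hv
    exact ⟨lam, hlam, g, hg, hgv, 1, one_mem_D1set, hone, (mul_one _).symm⟩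
  · obtain ⟨lam, hlam, g, hg, hgv, rfl⟩ := hfactor h hh hv
    refine ⟨lam₀ * lam, ?_, g, hg, hgv, 1, one_mem_D1set, hone, ?_⟩
    · rw [map_mul]
      linear_combination lam * conj lam * hlam₀ + hlam
    · rw [mul_one, ← mul_assoc, qmat_mul_qmat_zero, mul_zero]

/-- for `4 ∣ n`, `n ≥ 4`, `r = n/2 + 1` (so `r` odd), one has
`D¹_{r-1} ⊆ E¹·D¹_r·D¹_{n+1}`: every `h ∈ D¹` with `v_D(h-1) ≥ n/2` factors as
`h = e·g·u` with `e = x_{λ,0}`, `λ·λ̄ = 1`, `g ∈ D¹_{n/2+1}` and `u ∈ D¹_{n+1}`.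
Consequently `(E¹·D¹_{r-1})/D¹_{n+1} = (E¹·D¹_r)/D¹_{n+1}` (both inclusions of cosets). -/
theorem stmt10 (p : ℕ) [Fact p.Prime] (hp : p ≠ 2)
    (z : ℤ_[p]ˣ) (hz : ¬ ∃ w : ℤ_[p], w * w = (z : ℤ_[p]))
    (E : Type) [Field E] [Algebra ℚ_[p] E] (α : E)
    (hα : α * α = algebraMap ℚ_[p] E ((z : ℤ_[p]) : ℚ_[p]))
    (hα0 : α ∉ Set.range (algebraMap ℚ_[p] E))
    (hspan : ∀ x : E, ∃ a b : ℚ_[p], x = algebraMap ℚ_[p] E a + algebraMap ℚ_[p] E b * α)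
    (conj : E →ₐ[ℚ_[p]] E) (hconj : conj α = -α)
    (n : ℕ) (hn : 4 ≤ n) (hn4 : 4 ∣ n) :
    -- main inclusion D¹_{r-1} ⊆ E¹·D¹_r·D¹_{n+1}, r - 1 = n/2
    (∀ h ∈ D1set p E conj, vDge p E α conj (n / 2) (h - 1) →
      ∃ lam : E, lam * conj lam = 1 ∧
        ∃ g ∈ D1set p E conj, vDge p E α conj (n / 2 + 1) (g - 1) ∧
          ∃ u ∈ D1set p E conj, vDge p E α conj (n + 1) (u - 1) ∧
            h = qmat p E conj lam 0 * g * u) ∧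
    -- hence (E¹·D¹_{r-1})/D¹_{n+1} ⊆ (E¹·D¹_r)/D¹_{n+1}
    (∀ lam0 : E, lam0 * conj lam0 = 1 →
      ∀ h ∈ D1set p E conj, vDge p E α conj (n / 2) (h - 1) →
        ∃ lam : E, lam * conj lam = 1 ∧
          ∃ g ∈ D1set p E conj, vDge p E α conj (n / 2 + 1) (g - 1) ∧
            ∃ u ∈ D1set p E conj, vDge p E α conj (n + 1) (u - 1) ∧
              qmat p E conj lam0 0 * h = qmat p E conj lam 0 * g * u) ∧
    -- and (E¹·D¹_r)/D¹_{n+1} ⊆ (E¹·D¹_{r-1})/D¹_{n+1}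
    (∀ lam0 : E, lam0 * conj lam0 = 1 →
      ∀ g ∈ D1set p E conj, vDge p E α conj (n / 2 + 1) (g - 1) →
        ∃ lam : E, lam * conj lam = 1 ∧
          ∃ h ∈ D1set p E conj, vDge p E α conj (n / 2) (h - 1) ∧
            ∃ u ∈ D1set p E conj, vDge p E α conj (n + 1) (u - 1) ∧
              qmat p E conj lam0 0 * g = qmat p E conj lam 0 * h * u) :=
  stmt10_general p hp z E α hα hspan conj hconj n hn4
end
end

section
/- The dual lattice of A = Γ ⊗ Γ' with respect to ⟨⟨·,·⟩⟩ is A* = Γ ⊗ (O_E + P_E^{−1}·δ), i.e. A* consists of the O_E-span of the elements v ⊗ (c + p^{−1}d·δ) with v ∈ Γ and c, d ∈ O_E. Moreover A is a non-self-dual "good" lattice: p·A* ⊆ A and A ⊊ A*. -/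
noncomputable section
open Matrix

/-- The pure tensor `v ⊗ w ∈ 𝒲 = V ⊗_E W` in coordinates: `(v ⊗ w) i j = v i · conj (w j)`
(the `E`-structure on `W`-coordinates is twisted by conjugation, so that the symplectic
form below is well defined on `𝒲`).  Here `w = (c, d)` stands for `c + d·δ ∈ W = D`. -/
def tens (E : Type) [Field E] (conj : E → E) (v w : Fin 2 → E) :
    Matrix (Fin 2) (Fin 2) E :=
  Matrix.of fun i j => v i * conj (w j)

/-- The symplectic form `⟨⟨x, y⟩⟩ = Tr_{E/F}(⟨v,v'⟩·conj(⟨w,w'⟩'))` of `𝒲`, written in the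
coordinates above, with values `t + conj t` landing in (the image of) `F`. -/
def sympE (p : ℕ) [Fact p.Prime] (E : Type) [Field E] [Algebra ℚ_[p] E]
    (conj : E → E) (x y : Matrix (Fin 2) (Fin 2) E) : E :=
  (x 0 0 * conj (y 1 0) - pE p E * (x 0 1 * conj (y 1 1))
      - x 1 0 * conj (y 0 0) + pE p E * (x 1 1 * conj (y 0 1)))
    + conj (x 0 0 * conj (y 1 0) - pE p E * (x 0 1 * conj (y 1 1))
      - x 1 0 * conj (y 0 0) + pE p E * (x 1 1 * conj (y 0 1)))

/-- The lattice `A = Γ ⊗ Γ'`: the `O_E`-span (= additive span) of the pure tensors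
`v ⊗ w` with `v ∈ Γ = O_E²` and `w ∈ Γ' = O_E + O_E·δ`. -/
def Alat (p : ℕ) [Fact p.Prime] (E : Type) [Field E] [Algebra ℚ_[p] E]
    (α : E) (conj : E → E) : AddSubgroup (Matrix (Fin 2) (Fin 2) E) :=
  AddSubgroup.closure
    {m | ∃ v w : Fin 2 → E, (∀ i, v i ∈ OE p E α) ∧ (∀ j, w j ∈ OE p E α) ∧
      m = tens E conj v w}

/-- `x` lies in (the image in `E` of) `ℤ_p`. -/
def integralF (p : ℕ) [Fact p.Prime] (E : Type) [Field E] [Algebra ℚ_[p] E]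
    (x : E) : Prop :=
  ∃ s : ℤ_[p], x = algebraMap ℚ_[p] E ((s : ℚ_[p]))

/-- The dual lattice `L* = {z ∈ 𝒲 : ⟨⟨z, l⟩⟩ ∈ ℤ_p for all l ∈ L}`. -/
def dualLat (p : ℕ) [Fact p.Prime] (E : Type) [Field E] [Algebra ℚ_[p] E]
    (α : E) (conj : E → E) (L : Set (Matrix (Fin 2) (Fin 2) E)) :
    Set (Matrix (Fin 2) (Fin 2) E) :=
  {zz | ∀ l ∈ L, integralF p E (sympE p E conj zz l)}

/-- The entrywise embedding `M₂(ℤ_p) → M₂(E)`. -/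
def toE (p : ℕ) [Fact p.Prime] (E : Type) [Field E] [Algebra ℚ_[p] E]
    (m : Matrix (Fin 2) (Fin 2) ℤ_[p]) : Matrix (Fin 2) (Fin 2) E :=
  m.map fun t => algebraMap ℚ_[p] E (t : ℚ_[p])

/-- The Cayley transform `c(m) = (1 - m)(1 + m)⁻¹`. -/
def cay {E : Type} [Field E] (m : Matrix (Fin 2) (Fin 2) E) : Matrix (Fin 2) (Fin 2) E :=
  (1 - m) * (1 + m)⁻¹

/-- The skew-Hermitian form `⟨x, y⟩ = x₁·conj y₂ - x₂·conj y₁` on `V = E²`. -/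
def sesqV (E : Type) [Field E] (conj : E → E) (x y : Fin 2 → E) : E :=
  x 0 * conj (y 1) - x 1 * conj (y 0)

/-- `Tr_{E/F}(x) = x + conj x`, as an element of `E`. -/
def trEl (E : Type) [Field E] (conj : E → E) (x : E) : E := x + conj x

/-!
In the coordinates of `tens`, `A` is the set of matrices with all entries in `O_E`, and
`⟨⟨x, y⟩⟩` is the trace of a sum pairing each entry of `x` with one entry of `conj y`, up to
sign and, in the `δ`-column, a factor `p`. As `p` is odd and `z` a unit, `O_E` is self-dual
for the trace form, so `A*` is the set of matrices with first column in `O_E` and second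
column in `p⁻¹·O_E`, which is also the span of the `v ⊗ (c + p⁻¹d·δ)`. Then `p·A* ⊆ A ⊆ A*`
is clear, and `A ≠ A*` because `p⁻¹ ∉ O_E`: its trace `2/p` is not integral.
-/

namespace OE

variable {p : ℕ} [Fact p.Prime] {E : Type} [Field E] [Algebra ℚ_[p] E] {α : E}

theorem zero_mem : (0 : E) ∈ OE p E α := ⟨0, 0, by simp⟩

theorem one_mem : (1 : E) ∈ OE p E α := ⟨1, 0, by simp⟩

theorem alpha_mem : α ∈ OE p E α := ⟨0, 1, by simp⟩

theorem pE_mem : pE p E ∈ OE p E α := ⟨p, 0, by simp [pE]⟩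

theorem add_mem {x y : E} : x ∈ OE p E α → y ∈ OE p E α → x + y ∈ OE p E α := by
  rintro ⟨a, b, rfl⟩ ⟨c, d, rfl⟩
  exact ⟨a + c, b + d, by push_cast [map_add]; ring⟩

theorem neg_mem {x : E} : x ∈ OE p E α → -x ∈ OE p E α := by
  rintro ⟨a, b, rfl⟩
  exact ⟨-a, -b, by push_cast [map_neg]; ring⟩

theorem sub_mem {x y : E} (hx : x ∈ OE p E α) (hy : y ∈ OE p E α) : x - y ∈ OE p E α := by
  simpa only [sub_eq_add_neg] using add_mem hx (neg_mem hy)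

theorem mul_mem {c : ℤ_[p]} (hα : α * α = algebraMap ℚ_[p] E c) {x y : E} :
    x ∈ OE p E α → y ∈ OE p E α → x * y ∈ OE p E α := by
  rintro ⟨a, b, rfl⟩ ⟨a', b', rfl⟩
  refine ⟨a * a' + b * b' * c, a * b' + b * a', ?_⟩
  push_cast [map_add, map_mul]
  linear_combination algebraMap ℚ_[p] E b * algebraMap ℚ_[p] E b' * hα

theorem forall_mem_iff (w : Fin 2 → E) :
    (∀ j, w j ∈ OE p E α) ↔ ∃ c ∈ OE p E α, ∃ d ∈ OE p E α, w = ![c, 1 * d] := by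
  refine ⟨fun hw => ⟨w 0, hw 0, w 1, hw 1, ?_⟩, ?_⟩
  · ext j; fin_cases j <;> simp
  · rintro ⟨c, hc, d, hd, rfl⟩ j
    fin_cases j <;> simpa

theorem conj_add_mul (conj : E →ₐ[ℚ_[p]] E) (hconj : conj α = -α) (a b : ℚ_[p]) :
    conj (algebraMap ℚ_[p] E a + algebraMap ℚ_[p] E b * α)
      = algebraMap ℚ_[p] E a - algebraMap ℚ_[p] E b * α := by
  rw [map_add, map_mul, conj.commutes, conj.commutes, hconj]
  ring

theorem trEl_add_mul (conj : E →ₐ[ℚ_[p]] E) (hconj : conj α = -α) (a b : ℚ_[p]) :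
    trEl E conj (algebraMap ℚ_[p] E a + algebraMap ℚ_[p] E b * α)
      = algebraMap ℚ_[p] E (2 * a) := by
  rw [trEl, conj_add_mul conj hconj, map_mul, map_ofNat]
  ring

theorem conj_mem (conj : E →ₐ[ℚ_[p]] E) (hconj : conj α = -α) {x : E} :
    x ∈ OE p E α → conj x ∈ OE p E α := by
  rintro ⟨a, b, rfl⟩
  exact ⟨a, -b, by rw [conj_add_mul conj hconj]; push_cast [map_neg]; ring⟩

end OE

theorem pE_ne_zero (p : ℕ) [Fact p.Prime] (E : Type) [Field E] [Algebra ℚ_[p] E] :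
    pE p E ≠ 0 := by
  rw [pE, ne_eq, map_eq_zero]
  exact_mod_cast (Fact.out : p.Prime).ne_zero

section Integrality

variable {p : ℕ} [Fact p.Prime] {E : Type} [Field E] [Algebra ℚ_[p] E] {α : E}

theorem Padic.norm_two (hp : p ≠ 2) : ‖(2 : ℚ_[p])‖ = 1 := by
  have hcop : p.Coprime 2 := (Nat.coprime_primes Fact.out Nat.prime_two).mpr hp
  simpa using Padic.norm_natCast_eq_one_iff.mpr hcop

theorem integralF_algebraMap_iff {q : ℚ_[p]} :
    integralF p E (algebraMap ℚ_[p] E q) ↔ ‖q‖ ≤ 1 := by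
  refine ⟨fun ⟨s, hs⟩ => ?_, fun hq => ⟨⟨q, hq⟩, rfl⟩⟩
  rw [(algebraMap ℚ_[p] E).injective hs, PadicInt.padic_norm_e_of_padicInt]
  exact s.norm_le_one

theorem integralF_trEl_of_mem (conj : E →ₐ[ℚ_[p]] E) (hconj : conj α = -α) {x : E}
    (hx : x ∈ OE p E α) : integralF p E (trEl E conj x) := by
  obtain ⟨a, b, rfl⟩ := hx
  exact ⟨2 * a, by rw [OE.trEl_add_mul conj hconj]; push_cast; rfl⟩

/-- Self-duality of `O_E` for the trace form, tested against `1` and `α`. -/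
theorem mem_OE_of_integralF_trEl (hp : p ≠ 2) (z : ℤ_[p]ˣ)
    (hα : α * α = algebraMap ℚ_[p] E ((z : ℤ_[p]) : ℚ_[p]))
    (hspan : ∀ x : E, ∃ a b : ℚ_[p], x = algebraMap ℚ_[p] E a + algebraMap ℚ_[p] E b * α)
    (conj : E →ₐ[ℚ_[p]] E) (hconj : conj α = -α) {x : E}
    (h1 : integralF p E (trEl E conj x)) (h2 : integralF p E (trEl E conj (x * α))) :
    x ∈ OE p E α := by
  obtain ⟨a, b, rfl⟩ := hspan x
  have hxα : (algebraMap ℚ_[p] E a + algebraMap ℚ_[p] E b * α) * α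
      = algebraMap ℚ_[p] E (b * z) + algebraMap ℚ_[p] E a * α := by
    rw [map_mul]; linear_combination algebraMap ℚ_[p] E b * hα
  rw [OE.trEl_add_mul conj hconj, integralF_algebraMap_iff, norm_mul, Padic.norm_two hp,
    one_mul] at h1
  rw [hxα, OE.trEl_add_mul conj hconj, integralF_algebraMap_iff, norm_mul, norm_mul,
    Padic.norm_two hp, one_mul, PadicInt.padic_norm_e_of_padicInt, PadicInt.norm_units,
    mul_one] at h2
  exact ⟨⟨a, h1⟩, ⟨b, h2⟩, rfl⟩

theorem inv_pE_not_mem_OE (hp : p ≠ 2) (conj : E →ₐ[ℚ_[p]] E) (hconj : conj α = -α) :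
    (pE p E)⁻¹ ∉ OE p E α := by
  intro h
  have h2 := integralF_trEl_of_mem conj hconj h
  rw [trEl, pE, ← map_inv₀, conj.commutes, ← map_add, integralF_algebraMap_iff, ← two_mul,
    norm_mul, Padic.norm_two hp, one_mul, norm_inv, Padic.norm_p, inv_inv] at h2
  exact h2.not_gt (mod_cast (Fact.out : p.Prime).one_lt)

end Integrality

/-- `Γ ⊗ (O_E + t·O_E·δ)`, in the coordinates of `tens` (for `conj t = t`). -/
def gammaTensor (p : ℕ) [Fact p.Prime] (E : Type) [Field E] [Algebra ℚ_[p] E] (α t : E) :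
    AddSubgroup (Matrix (Fin 2) (Fin 2) E) where
  carrier := {m | ∀ i, m i 0 ∈ OE p E α ∧ ∃ d ∈ OE p E α, m i 1 = t * d}
  zero_mem' _ := ⟨OE.zero_mem, 0, OE.zero_mem, by simp⟩
  add_mem' {x y} hx hy i := by
    obtain ⟨hx0, c, hc, hxc⟩ := hx i
    obtain ⟨hy0, d, hd, hyd⟩ := hy i
    exact ⟨OE.add_mem hx0 hy0, c + d, OE.add_mem hc hd, by simp [hxc, hyd, mul_add]⟩
  neg_mem' {x} hx i := by
    obtain ⟨hx0, c, hc, hxc⟩ := hx i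
    exact ⟨OE.neg_mem hx0, -c, OE.neg_mem hc, by simp [hxc]⟩

namespace gammaTensor

variable {p : ℕ} [Fact p.Prime] {E : Type} [Field E] [Algebra ℚ_[p] E] {α : E}

theorem mem_one_iff {m : Matrix (Fin 2) (Fin 2) E} :
    m ∈ gammaTensor p E α 1 ↔ ∀ i j, m i j ∈ OE p E α := by
  refine ⟨fun h i j => ?_, fun h i => ⟨h i 0, m i 1, h i 1, (one_mul _).symm⟩⟩
  obtain ⟨h0, d, hd, hmd⟩ := h i
  fin_cases j
  · exact h0
  · simpa [hmd] using hd

theorem mono {c : ℤ_[p]} (hα : α * α = algebraMap ℚ_[p] E c) {t u : E}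
    (hu : u ∈ OE p E α) :
    gammaTensor p E α (t * u) ≤ gammaTensor p E α t := fun m hm i => by
  obtain ⟨h0, d, hd, hmd⟩ := hm i
  exact ⟨h0, u * d, OE.mul_mem hα hu hd, by rw [hmd, mul_assoc]⟩

theorem smul_mem {c : ℤ_[p]} (hα : α * α = algebraMap ℚ_[p] E c) {t u : E}
    (hu : u ∈ OE p E α) {m : Matrix (Fin 2) (Fin 2) E} (hm : m ∈ gammaTensor p E α t) :
    u • m ∈ gammaTensor p E α (u * t) := fun i => by
  obtain ⟨h0, d, hd, hmd⟩ := hm i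
  exact ⟨OE.mul_mem hα hu h0, d, hd, by simp [hmd, mul_assoc]⟩

theorem closure_tens_eq {c : ℤ_[p]} (hα : α * α = algebraMap ℚ_[p] E c)
    (conj : E →ₐ[ℚ_[p]] E) (hconj : conj α = -α) {t : E} (ht : conj t = t) :
    AddSubgroup.closure
        {m | ∃ v w : Fin 2 → E, (∀ i, v i ∈ OE p E α) ∧
          (∃ c ∈ OE p E α, ∃ d ∈ OE p E α, w = ![c, t * d]) ∧ m = tens E conj v w}
      = gammaTensor p E α t := by
  apply le_antisymm
  · rw [AddSubgroup.closure_le]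
    rintro _ ⟨v, _, hv, ⟨c, hc, d, hd, rfl⟩, rfl⟩ i
    refine ⟨OE.mul_mem hα (hv i) (OE.conj_mem conj hconj hc), v i * conj d,
      OE.mul_mem hα (hv i) (OE.conj_mem conj hconj hd), ?_⟩
    change v i * conj (t * d) = t * (v i * conj d)
    rw [map_mul, ht]
    ring
  · intro m hm
    choose hm0 d hd hmd using hm
    have hsplit :
        m = tens E conj (fun i => m i 0) ![1, t * 0] + tens E conj d ![0, t * 1] := by
      ext i j
      fin_cases j <;> simp [tens, ht, hmd, mul_comm]
    rw [hsplit]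
    exact add_mem
      (AddSubgroup.subset_closure ⟨_, _, hm0, ⟨1, OE.one_mem, 0, OE.zero_mem, rfl⟩, rfl⟩)
      (AddSubgroup.subset_closure ⟨d, _, hd, ⟨0, OE.zero_mem, 1, OE.one_mem, rfl⟩, rfl⟩)

theorem one_lt_inv_pE (hp : p ≠ 2) {c : ℤ_[p]} (hα : α * α = algebraMap ℚ_[p] E c)
    (conj : E →ₐ[ℚ_[p]] E) (hconj : conj α = -α) :
    gammaTensor p E α 1 < gammaTensor p E α (pE p E)⁻¹ := by
  refine lt_of_le_not_ge ?_ fun hle => ?_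
  · simpa [inv_mul_cancel₀ (pE_ne_zero p E)] using mono (t := (pE p E)⁻¹) hα OE.pE_mem
  · have hmem : !![0, (pE p E)⁻¹; 0, 0] ∈ gammaTensor p E α (pE p E)⁻¹ := fun i => by
      fin_cases i
      · exact ⟨OE.zero_mem, 1, OE.one_mem, by simp⟩
      · exact ⟨OE.zero_mem, 0, OE.zero_mem, by simp⟩
    exact inv_pE_not_mem_OE hp conj hconj (by simpa using mem_one_iff.mp (hle hmem) 0 1)

end gammaTensor

section Duality

variable {p : ℕ} [Fact p.Prime] {E : Type} [Field E] [Algebra ℚ_[p] E] {α : E}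

theorem Alat_eq_gammaTensor_one {c : ℤ_[p]} (hα : α * α = algebraMap ℚ_[p] E c)
    (conj : E →ₐ[ℚ_[p]] E) (hconj : conj α = -α) :
    Alat p E α conj = gammaTensor p E α 1 := by
  rw [← gammaTensor.closure_tens_eq hα conj hconj (map_one conj), Alat]
  simp only [OE.forall_mem_iff]

theorem dualLat_Alat_subset (hp : p ≠ 2) (z : ℤ_[p]ˣ)
    (hα : α * α = algebraMap ℚ_[p] E ((z : ℤ_[p]) : ℚ_[p]))
    (hspan : ∀ x : E, ∃ a b : ℚ_[p], x = algebraMap ℚ_[p] E a + algebraMap ℚ_[p] E b * α)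
    (conj : E →ₐ[ℚ_[p]] E) (hconj : conj α = -α) :
    dualLat p E α conj (Alat p E α conj) ⊆ gammaTensor p E α (pE p E)⁻¹ := by
  intro zz hzz
  rw [Alat_eq_gammaTensor_one hα conj hconj] at hzz
  -- pairing with the matrix whose only nonzero entry is `u` isolates one coordinate of `zz`
  have test : ∀ a b c d, a ∈ OE p E α → b ∈ OE p E α → c ∈ OE p E α →
      d ∈ OE p E α → integralF p E (sympE p E conj zz !![a, b; c, d]) := by
    intro a b c d ha hb hc hd
    refine hzz _ (gammaTensor.mem_one_iff.mpr fun i j => ?_)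
    fin_cases i <;> fin_cases j <;> simpa
  have entry : ∀ x, (∀ u ∈ OE p E α, integralF p E (trEl E conj (x * conj u))) →
      x ∈ OE p E α := fun x hx =>
    mem_OE_of_integralF_trEl hp z hα hspan conj hconj (by simpa using hx 1 OE.one_mem)
      (by simpa [hconj] using hx (-α) (OE.neg_mem OE.alpha_mem))
  have h0 := OE.zero_mem (p := p) (α := α)
  have h00 : zz 0 0 ∈ OE p E α := entry _ fun u hu => by
    simpa [sympE, trEl] using test 0 0 u 0 h0 h0 hu h0
  have h10 : zz 1 0 ∈ OE p E α := entry _ fun u hu => by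
    simpa [sympE, trEl] using test (-u) 0 0 0 (OE.neg_mem hu) h0 h0 h0
  have h01 : pE p E * zz 0 1 ∈ OE p E α := entry _ fun u hu => by
    simpa [sympE, trEl, mul_assoc] using test 0 0 0 (-u) h0 h0 h0 (OE.neg_mem hu)
  have h11 : pE p E * zz 1 1 ∈ OE p E α := entry _ fun u hu => by
    simpa [sympE, trEl, mul_assoc] using test 0 u 0 0 h0 hu h0 h0
  intro i
  fin_cases i
  · exact ⟨h00, _, h01, (inv_mul_cancel_left₀ (pE_ne_zero p E) _).symm⟩
  · exact ⟨h10, _, h11, (inv_mul_cancel_left₀ (pE_ne_zero p E) _).symm⟩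

theorem gammaTensor_inv_pE_subset_dualLat {c : ℤ_[p]} (hα : α * α = algebraMap ℚ_[p] E c)
    (conj : E →ₐ[ℚ_[p]] E) (hconj : conj α = -α) :
    (gammaTensor p E α (pE p E)⁻¹ : Set (Matrix (Fin 2) (Fin 2) E))
      ⊆ dualLat p E α conj (Alat p E α conj) := by
  intro zz hzz l hl
  rw [Alat_eq_gammaTensor_one hα conj hconj, SetLike.mem_coe, gammaTensor.mem_one_iff] at hl
  obtain ⟨h00, c0, hc0, e0⟩ := hzz 0
  obtain ⟨h10, c1, hc1, e1⟩ := hzz 1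
  have hmul := fun {x y : E} => OE.mul_mem (x := x) (y := y) hα
  have hl' := fun i j => OE.conj_mem conj hconj (hl i j)
  unfold sympE
  apply integralF_trEl_of_mem conj hconj
  simp only [e0, e1, mul_assoc, mul_inv_cancel_left₀ (pE_ne_zero p E)]
  exact OE.add_mem (OE.sub_mem (OE.sub_mem (hmul h00 (hl' 1 0)) (hmul hc0 (hl' 1 1)))
    (hmul h10 (hl' 0 0))) (hmul hc1 (hl' 0 1))

theorem dualLat_Alat (hp : p ≠ 2) (z : ℤ_[p]ˣ)
    (hα : α * α = algebraMap ℚ_[p] E ((z : ℤ_[p]) : ℚ_[p]))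
    (hspan : ∀ x : E, ∃ a b : ℚ_[p], x = algebraMap ℚ_[p] E a + algebraMap ℚ_[p] E b * α)
    (conj : E →ₐ[ℚ_[p]] E) (hconj : conj α = -α) :
    dualLat p E α conj (Alat p E α conj) = gammaTensor p E α (pE p E)⁻¹ :=
  (dualLat_Alat_subset hp z hα hspan conj hconj).antisymm
    (gammaTensor_inv_pE_subset_dualLat hα conj hconj)

end Duality

theorem stmt12_general (p : ℕ) [Fact p.Prime] (hp : p ≠ 2)
    (z : ℤ_[p]ˣ)
    (E : Type) [Field E] [Algebra ℚ_[p] E] (α : E)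
    (hα : α * α = algebraMap ℚ_[p] E ((z : ℤ_[p]) : ℚ_[p]))
    (hspan : ∀ x : E, ∃ a b : ℚ_[p], x = algebraMap ℚ_[p] E a + algebraMap ℚ_[p] E b * α)
    (conj : E →ₐ[ℚ_[p]] E) (hconj : conj α = -α) :
    dualLat p E α conj (Alat p E α conj)
      = (AddSubgroup.closure
          {m | ∃ v w : Fin 2 → E, (∀ i, v i ∈ OE p E α) ∧
            (∃ c ∈ OE p E α, ∃ d ∈ OE p E α, w = ![c, (pE p E)⁻¹ * d]) ∧
            m = tens E conj v w} : Set (Matrix (Fin 2) (Fin 2) E)) ∧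
    (∀ zz ∈ dualLat p E α conj (Alat p E α conj), pE p E • zz ∈ Alat p E α conj) ∧
    (Alat p E α conj : Set (Matrix (Fin 2) (Fin 2) E))
      ⊆ dualLat p E α conj (Alat p E α conj) ∧
    (Alat p E α conj : Set (Matrix (Fin 2) (Fin 2) E))
      ≠ dualLat p E α conj (Alat p E α conj) := by
  have hA := Alat_eq_gammaTensor_one hα conj hconj
  have hdual := dualLat_Alat hp z hα hspan conj hconj
  have hlt := gammaTensor.one_lt_inv_pE hp hα conj hconj
  have hconj_inv_pE : conj (pE p E)⁻¹ = (pE p E)⁻¹ := by rw [map_inv₀, pE, conj.commutes]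
  rw [hdual, hA]
  refine ⟨by rw [gammaTensor.closure_tens_eq hα conj hconj hconj_inv_pE], fun zz hzz => ?_,
    SetLike.coe_subset_coe.mpr hlt.le, fun h => hlt.ne (SetLike.coe_injective h)⟩
  rw [← mul_inv_cancel₀ (pE_ne_zero p E)]
  exact gammaTensor.smul_mem hα OE.pE_mem hzz

/-- the dual lattice of `A = Γ ⊗ Γ'` with respect to `⟨⟨·,·⟩⟩` is
`A* = Γ ⊗ (O_E + P_E⁻¹·δ)`, the `O_E`-span of the `v ⊗ (c + p⁻¹·d·δ)` with `v ∈ Γ`,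
`c, d ∈ O_E`; moreover `A` is a non-self-dual "good" lattice: `p·A* ⊆ A ⊊ A*`. -/
theorem stmt12 (p : ℕ) [Fact p.Prime] (hp : p ≠ 2)
    (z : ℤ_[p]ˣ) (hz : ¬ ∃ w : ℤ_[p], w * w = (z : ℤ_[p]))
    (E : Type) [Field E] [Algebra ℚ_[p] E] (α : E)
    (hα : α * α = algebraMap ℚ_[p] E ((z : ℤ_[p]) : ℚ_[p]))
    (hα0 : α ∉ Set.range (algebraMap ℚ_[p] E))
    (hspan : ∀ x : E, ∃ a b : ℚ_[p], x = algebraMap ℚ_[p] E a + algebraMap ℚ_[p] E b * α)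
    (conj : E →ₐ[ℚ_[p]] E) (hconj : conj α = -α) :
    dualLat p E α conj (Alat p E α conj)
      = (AddSubgroup.closure
          {m | ∃ v w : Fin 2 → E, (∀ i, v i ∈ OE p E α) ∧
            (∃ c ∈ OE p E α, ∃ d ∈ OE p E α, w = ![c, (pE p E)⁻¹ * d]) ∧
            m = tens E conj v w} : Set (Matrix (Fin 2) (Fin 2) E)) ∧
    (∀ zz ∈ dualLat p E α conj (Alat p E α conj), pE p E • zz ∈ Alat p E α conj) ∧
    (Alat p E α conj : Set (Matrix (Fin 2) (Fin 2) E))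
      ⊆ dualLat p E α conj (Alat p E α conj) ∧
    (Alat p E α conj : Set (Matrix (Fin 2) (Fin 2) E))
      ≠ dualLat p E α conj (Alat p E α conj) :=
  stmt12_general p hp z E α hα hspan conj hconj
end
end
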